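/- arXiv:2003.06267 — 4 statements merged into one kernel-verified Lean document; each statement's English description precedes it below -/
import Mathlib

section
/- Let (A,≡_A) be an equivalence family and er(A) = (P, ≤_P, Con_P, ≡_P) its causal unfolding. The configurations of er(A), ordered by inclusion, are order-isomorphic to the order of extremal realisations of A: an extremal realisation ρ corresponds, up to isomorphism of realisations, to the configuration {p ∈ P : p ⪯ ρ} of er(A), and conversely a configuration x of er(A) corresponds to the extremal realisation with carrier (x, ⪯) (the restriction of ≤_P to x) and function max : x → A sending each prime extremal to the image of its top element. -/
universe u v w

/-- The image of a set under a partial function. -/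
def pimage {α : Type u} {β : Type v} (f : α → Option β) (x : Set α) : Set β :=
  {b | ∃ a ∈ x, f a = some b}

/-- A family of configurations over the set of events `A`:
a non-empty family of subsets, whose underlying set is all of `A`,
closed under unions of finitely compatible subfamilies,
and satisfying the securing-chain condition. -/
structure ConfigFamily (A : Type u) where
  F : Set (Set A)
  nonempty : F.Nonempty
  covers : ∀ a : A, ∃ x ∈ F, a ∈ x
  unionClosed : ∀ X ⊆ F, (∀ Y ⊆ X, Y.Finite → ∃ z ∈ F, ∀ y ∈ Y, y ⊆ z) → ⋃₀ X ∈ F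
  secured : ∀ x ∈ F, ∀ e ∈ x, ∃ l : List A, l ≠ [] ∧ l.getLast? = some e ∧
    (∀ a ∈ l, a ∈ x) ∧ ∀ i, 0 < i → i ≤ l.length → {a | a ∈ l.take i} ∈ F

/-- A causal realisation of the family `C`: a partial order whose
principal lower sets are finite, together with a function to events
sending every down-closed subset to a configuration of the family. -/
structure Realisation {A : Type u} (C : ConfigFamily A) where
  carrier : Type u
  le : carrier → carrier → Prop
  le_refl : ∀ a, le a a
  le_trans : ∀ a b c, le a b → le b c → le a c
  le_antisymm : ∀ a b, le a b → le b a → a = b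
  finPast : ∀ e, {e' | le e' e}.Finite
  ρ : carrier → A
  real : ∀ x : Set carrier, (∀ a ∈ x, ∀ b, le b a → b ∈ x) → ρ '' x ∈ C.F

namespace Realisation

variable {A : Type u} {C : ConfigFamily A}

/-- Down-closed subsets of the carrier of a realisation. -/
def IsDown (r : Realisation C) (x : Set r.carrier) : Prop :=
  ∀ a ∈ x, ∀ b, r.le b a → b ∈ x

/-- The set `[a) = [a] \ {a}` of strict predecessors. -/
def spred (r : Realisation C) (a : r.carrier) : Set r.carrier :=
  {b | r.le b a ∧ b ≠ a}

/-- The carrier has a top element. -/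
def HasTop (r : Realisation C) : Prop := ∃ t, ∀ a, r.le a t

end Realisation

/-- A map of realisations: a partial surjective function between the carriers,
preserving down-closed subsets and commuting with the functions to events. -/
structure RealMap {A : Type u} {C : ConfigFamily A} (r r' : Realisation C) where
  f : r.carrier → Option r'.carrier
  surj : ∀ b, ∃ a, f a = some b
  presDown : ∀ x, r.IsDown x → r'.IsDown (pimage f x)
  commutes : ∀ a b, f a = some b → r.ρ a = r'.ρ b

namespace RealMap

variable {A : Type u} {C : ConfigFamily A} {r r' r₀ : Realisation C}

/-- The map is total. -/
def IsTotal (m : RealMap r r') : Prop := ∀ a, ∃ b, m.f a = some b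

/-- The map is an isomorphism of realisations: it has an inverse map of
realisations, given by the inverse relation. -/
def IsIso (m : RealMap r r') : Prop :=
  ∃ m' : RealMap r' r, ∀ a b, m.f a = some b ↔ m'.f b = some a

/-- `m : r → r₀` is a projection witnessed by `g`: `g` realises the carrier of
`r₀` as a subset of the carrier of `r` with the restricted order and restricted
function to events, and `m` is the inverse relation of this inclusion. -/
def IsProjectionVia (m : RealMap r r₀) (g : r₀.carrier → r.carrier) : Prop :=
  Function.Injective g ∧ (∀ a b, r₀.le a b ↔ r.le (g a) (g b)) ∧
    (∀ a, r₀.ρ a = r.ρ (g a)) ∧ (∀ a b, m.f a = some b ↔ g b = a)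

/-- `m` is a projection. -/
def IsProjection (m : RealMap r r₀) : Prop := ∃ g, m.IsProjectionVia g

end RealMap

/-- A realisation is extremal when every total map of realisations from it
is an isomorphism. -/
def Realisation.Extremal {A : Type u} {C : ConfigFamily A} (r : Realisation C) : Prop :=
  ∀ (r' : Realisation C) (m : RealMap r r'), m.IsTotal → m.IsIso

/-- A prime extremal realisation: extremal with a top element. -/
def Realisation.PrimeExtremal {A : Type u} {C : ConfigFamily A} (r : Realisation C) : Prop :=
  r.Extremal ∧ r.HasTop

/-- Isomorphism of realisations. -/
def RealIso {A : Type u} {C : ConfigFamily A} (r r' : Realisation C) : Prop :=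
  ∃ m : RealMap r r', m.IsIso

/-- `m` is the composite of `m₁` followed by `m₂` (as partial functions). -/
def CompEq {A : Type u} {C : ConfigFamily A} {r r' r'' : Realisation C}
    (m₁ : RealMap r r') (m₂ : RealMap r' r'') (m : RealMap r r'') : Prop :=
  ∀ a c, m.f a = some c ↔ ∃ b, m₁.f a = some b ∧ m₂.f b = some c

/-- Down-closed subsets w.r.t. a causal dependency relation. -/
def DnClosed {P : Type u} (le : P → P → Prop) (x : Set P) : Prop :=
  ∀ a ∈ x, ∀ b, le b a → b ∈ x

/-- Configurations of a (prime) event structure: down-closed subsets all of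
whose finite subsets are consistent. -/
def IsCfg {P : Type u} (le : P → P → Prop) (Con : Set (Set P)) (x : Set P) : Prop :=
  DnClosed le x ∧ ∀ X ⊆ x, X.Finite → X ∈ Con

/-- The set `[p) = [p] \ {p}` of strict causal predecessors. -/
def strictPred {P : Type u} (le : P → P → Prop) (p : P) : Set P :=
  {p' | le p' p ∧ p' ≠ p}

/-- The data of a prime event structure with equivalence (ese). -/
structure ESEData (P : Type u) where
  le : P → P → Prop
  Con : Set (Set P)
  eqv : P → P → Prop

/-- The axioms of a prime event structure with equivalence. -/
structure IsESE {P : Type u} (D : ESEData P) : Prop where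
  le_refl : ∀ a, D.le a a
  le_trans : ∀ a b c, D.le a b → D.le b c → D.le a c
  le_antisymm : ∀ a b, D.le a b → D.le b a → a = b
  finCause : ∀ e, {e' | D.le e' e}.Finite
  con_fin : ∀ X ∈ D.Con, X.Finite
  con_single : ∀ e, ({e} : Set P) ∈ D.Con
  con_mono : ∀ X Y, X ⊆ Y → Y ∈ D.Con → X ∈ D.Con
  con_le : ∀ X ∈ D.Con, ∀ e e', D.le e e' → e' ∈ X → X ∪ {e} ∈ D.Con
  eqv_equiv : Equivalence D.eqv

/-- The configurations of an ese. -/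
def Cfgs {P : Type u} (D : ESEData P) : Set (Set P) := {x | IsCfg D.le D.Con x}

/-- A partial function preserves the equivalences: equivalent elements are
either both sent to nothing, or both to defined, equivalent results. -/
def PreservesEqv {α : Type u} {β : Type v} (eA : α → α → Prop) (eB : β → β → Prop)
    (f : α → Option β) : Prop :=
  ∀ a₁ a₂, eA a₁ a₂ → (f a₁ = none ∧ f a₂ = none) ∨
    ∃ b₁ b₂, f a₁ = some b₁ ∧ f a₂ = some b₂ ∧ eB b₁ b₂

/-- A map of equivalence families (given by their families of configurations
and equivalences): a partial function which preserves the equivalence, sends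
configurations to configurations, and locally reflects the equivalence. -/
def IsEFMap {α : Type u} {β : Type v} (FA : Set (Set α)) (eA : α → α → Prop)
    (FB : Set (Set β)) (eB : β → β → Prop) (f : α → Option β) : Prop :=
  PreservesEqv eA eB f ∧ ∀ x ∈ FA, pimage f x ∈ FB ∧
    ∀ a₁ ∈ x, ∀ a₂ ∈ x, ∀ b₁ b₂, f a₁ = some b₁ → f a₂ = some b₂ → eB b₁ b₂ → eA a₁ a₂

/-- A map of ese's: a map of equivalence families between the families of
configurations with their equivalences. -/
def IsESEMap {P : Type u} {Q : Type v} (DP : ESEData P) (DQ : ESEData Q)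
    (f : P → Option Q) : Prop :=
  IsEFMap (Cfgs DP) DP.eqv (Cfgs DQ) DQ.eqv f

/-- Equivalence of partial maps: equidefined with equivalent results. -/
def MapEqv {α : Type u} {β : Type v} (eB : β → β → Prop) (f g : α → Option β) : Prop :=
  ∀ a, (f a = none ∧ g a = none) ∨ ∃ b₁ b₂, f a = some b₁ ∧ g a = some b₂ ∧ eB b₁ b₂

/-- The causal dependency of the causal unfolding: `p' ≤ p` iff there is a map
of realisations from `p` to `p'`. -/
def erLe {A : Type u} {C : ConfigFamily A} (P : Set (Realisation C)) (p' p : ↥P) : Prop :=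
  Nonempty (RealMap p.val p'.val)

/-- `P` is a choice of one prime extremal realisation from each isomorphism
class of prime extremal realisations of the family. -/
def erChoice {A : Type u} {C : ConfigFamily A} (P : Set (Realisation C)) : Prop :=
  (∀ p ∈ P, Realisation.PrimeExtremal p) ∧
  ∀ r : Realisation C, r.PrimeExtremal → ∃! p, p ∈ P ∧ RealIso p r

/-- `mx` sends each chosen prime extremal realisation to the image of its top
element. -/
def erMax {A : Type u} {C : ConfigFamily A} {P : Set (Realisation C)} (mx : ↥P → A) : Prop :=
  ∀ p : ↥P, ∃ t : p.val.carrier, (∀ a, p.val.le a t) ∧ mx p = p.val.ρ t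

/-- The causal unfolding `er(A)` of an equivalence family, as an ese on the
chosen prime extremal realisations `P`: causal dependency is `erLe`; a finite
set is consistent when the image under `mx` of its down-closure is a
configuration; two primes are equivalent when their tops are. -/
def erData {A : Type u} {C : ConfigFamily A} (P : Set (Realisation C))
    (eqA : A → A → Prop) (mx : ↥P → A) : ESEData ↥P where
  le := erLe P
  Con := {X | X.Finite ∧ mx '' {p | ∃ q ∈ X, erLe P p q} ∈ C.F}
  eqv := fun p₁ p₂ => eqA (mx p₁) (mx p₂)

/-!
A map of realisations out of an extremal realisation is, up to isomorphism, the projection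
onto its domain, which is down-closed: the map factors as a total map, which extremality makes
an isomorphism, followed by a projection. So the primes below an extremal `r` are the pasts
`[a]` of its elements. Distinct elements of `r` have non-isomorphic pasts, by induction on the
size of the past: elements with isomorphic pasts would be twins, and merging twins is a total
map that is not injective. Hence `a ↦ [a]` identifies `r` with the configuration
`θ r = {p | p ⪯ r}` of `er(A)`, ordered by `⪯` and labelled by `max`, and maps `r → r'`
correspond to inclusions `θ r' ⊆ θ r`. Conversely, a configuration `x`, ordered by `⪯` and
labelled by `max`, is a realisation whose pasts are the primes in `x`; as these are extremal
and pairwise non-isomorphic, it is extremal, and `θ` of it is `x`.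
-/

noncomputable section

namespace ConfigFamily

variable {A : Type u} (C : ConfigFamily A)

theorem union_mem_of_subset {x y z : Set A} (hx : x ∈ C.F) (hy : y ∈ C.F) (hz : z ∈ C.F)
    (hxz : x ⊆ z) (hyz : y ⊆ z) : x ∪ y ∈ C.F := by
  rw [← Set.sUnion_pair]
  refine C.unionClosed _ (Set.pair_subset hx hy) fun Y hY _ => ⟨z, hz, fun w hw => ?_⟩
  rcases hY hw with rfl | rfl <;> assumption

theorem iUnion_mem_of_monotone {ι : Type v} [Preorder ι] [IsDirectedOrder ι] [Nonempty ι]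
    {f : ι → Set A} (hf : Monotone f) (hF : ∀ i, f i ∈ C.F) : ⋃ i, f i ∈ C.F := by
  rw [← Set.sUnion_range]
  refine C.unionClosed _ (Set.range_subset_iff.2 hF) fun Y hY hYfin => ?_
  obtain ⟨I, -, hIfin, rfl⟩ :=
    hYfin.exists_subset_finite_image_eq (s := Set.univ) (by rwa [Set.image_univ])
  obtain ⟨j, hj⟩ := hIfin.bddAbove
  exact ⟨f j, hF j, by rintro _ ⟨i, hi, rfl⟩; exact hf (hj hi)⟩

end ConfigFamily

namespace Realisation

variable {A : Type u} {C : ConfigFamily A} (r : Realisation C)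

def past (a : r.carrier) : Set r.carrier := {b | r.le b a}

theorem mem_past_self (a : r.carrier) : a ∈ r.past a := r.le_refl a

theorem isDown_past (a : r.carrier) : r.IsDown (r.past a) :=
  fun _ hc _ hb => r.le_trans _ _ _ hb hc

theorem past_eq_of_isDown {x : Set r.carrier} (hx : r.IsDown x) {a : r.carrier} (ha : a ∈ x)
    (hmax : ∀ b ∈ x, r.le b a) : x = r.past a :=
  Set.Subset.antisymm hmax fun b hb => hx a ha b hb

abbrev restrict (x : Set r.carrier) (hx : r.IsDown x) : Realisation C where
  carrier := x
  le a b := r.le a b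
  le_refl a := r.le_refl a
  le_trans _ _ _ := r.le_trans _ _ _
  le_antisymm _ _ hab hba := Subtype.ext (r.le_antisymm _ _ hab hba)
  finPast e := (r.finPast e).preimage Subtype.val_injective.injOn
  ρ a := r.ρ a
  real y hy := by
    rw [← Set.image_image]
    refine r.real _ ?_
    rintro _ ⟨a, ha, rfl⟩ b hb
    exact ⟨⟨b, hx a a.2 b hb⟩, hy a ha _ hb, rfl⟩

abbrev pastRestrict (a : r.carrier) : Realisation C := r.restrict (r.past a) (r.isDown_past a)

/-- The bundled form of `RealIso` (see `realIso_iff`). -/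
structure Iso (r s : Realisation C) where
  toEquiv : r.carrier ≃ s.carrier
  le_iff : ∀ a b, r.le a b ↔ s.le (toEquiv a) (toEquiv b)
  ρ_eq : ∀ a, s.ρ (toEquiv a) = r.ρ a

infixl:25 " ≃ᵣ " => Iso

namespace Iso

variable {r} {s t : Realisation C}

instance : CoeFun (r ≃ᵣ s) (fun _ => r.carrier → s.carrier) := ⟨fun g => g.toEquiv⟩

def refl (r : Realisation C) : r ≃ᵣ r := ⟨Equiv.refl _, fun _ _ => Iff.rfl, fun _ => rfl⟩

def symm (g : r ≃ᵣ s) : s ≃ᵣ r where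
  toEquiv := g.toEquiv.symm
  le_iff a b := by rw [g.le_iff, Equiv.apply_symm_apply, Equiv.apply_symm_apply]
  ρ_eq a := by rw [← g.ρ_eq, Equiv.apply_symm_apply]

def trans (g : r ≃ᵣ s) (g' : s ≃ᵣ t) : r ≃ᵣ t where
  toEquiv := g.toEquiv.trans g'.toEquiv
  le_iff a b := (g.le_iff a b).trans (g'.le_iff _ _)
  ρ_eq a := (g'.ρ_eq _).trans (g.ρ_eq a)

@[simp] theorem trans_apply (g : r ≃ᵣ s) (g' : s ≃ᵣ t) (a : r.carrier) :
    g.trans g' a = g' (g a) := rfl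

@[simp] theorem apply_symm_apply (g : r ≃ᵣ s) (b : s.carrier) : g (g.symm b) = b :=
  g.toEquiv.apply_symm_apply b

@[simp] theorem symm_apply_apply (g : r ≃ᵣ s) (a : r.carrier) : g.symm (g a) = a :=
  g.toEquiv.symm_apply_apply a

theorem injective (g : r ≃ᵣ s) : Function.Injective g := g.toEquiv.injective

theorem le_symm_apply (g : r ≃ᵣ s) (a : r.carrier) (b : s.carrier) :
    r.le a (g.symm b) ↔ s.le (g a) b := by
  rw [g.le_iff, apply_symm_apply]

theorem symm_apply_le (g : r ≃ᵣ s) (a : r.carrier) (b : s.carrier) :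
    r.le (g.symm b) a ↔ s.le b (g a) := by
  rw [g.le_iff, apply_symm_apply]

def ofBijective (f : r.carrier → s.carrier) (hf : Function.Bijective f)
    (hle : ∀ a b, r.le a b ↔ s.le (f a) (f b)) (hρ : ∀ a, s.ρ (f a) = r.ρ a) : r ≃ᵣ s :=
  ⟨Equiv.ofBijective f hf, hle, hρ⟩

end Iso

def restrictCongr {x y : Set r.carrier} (h : x = y) (hx : r.IsDown x) (hy : r.IsDown y) :
    r.restrict x hx ≃ᵣ r.restrict y hy :=
  ⟨Equiv.setCongr h, fun _ _ => Iff.rfl, fun _ => rfl⟩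

end Realisation

open Realisation

theorem Set.partialInv_val_eq_some {α : Type u} {x : Set α} {a : α} {b : x} :
    Function.partialInv (Subtype.val : x → α) a = some b ↔ b.1 = a :=
  Subtype.val_injective.isPartialInv _ _

namespace RealMap

variable {A : Type u} {C : ConfigFamily A} {r s t : Realisation C}

theorem lift_le (m : RealMap r s) {a : r.carrier} {b b' : s.carrier} (h : m.f a = some b)
    (hb : s.le b' b) : ∃ a', r.le a' a ∧ m.f a' = some b' :=
  m.presDown _ (r.isDown_past a) b ⟨a, r.le_refl a, h⟩ b' hb

theorem isDown_pimage_of_lift {f : r.carrier → Option s.carrier}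
    (hf : ∀ a b b', f a = some b → s.le b' b → ∃ a', r.le a' a ∧ f a' = some b')
    (x : Set r.carrier) (hx : r.IsDown x) : s.IsDown (pimage f x) := by
  rintro b ⟨a, ha, hab⟩ b' hb'
  obtain ⟨a', ha', h'⟩ := hf a b b' hab hb'
  exact ⟨a', hx a ha a' ha', h'⟩

protected def id (r : Realisation C) : RealMap r r where
  f := some
  surj b := ⟨b, rfl⟩
  presDown := isDown_pimage_of_lift fun a _ b' h hb => by
    cases Option.some_injective _ h
    exact ⟨b', hb, rfl⟩
  commutes a b h := by cases Option.some_injective _ h; rfl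

def comp (m₁ : RealMap r s) (m₂ : RealMap s t) : RealMap r t where
  f a := (m₁.f a).bind m₂.f
  surj c := by
    obtain ⟨b, hb⟩ := m₂.surj c
    obtain ⟨a, ha⟩ := m₁.surj b
    exact ⟨a, by rw [ha, Option.bind_some, hb]⟩
  presDown := isDown_pimage_of_lift fun a c c' h hc => by
    obtain ⟨b, hb, hbc⟩ := Option.bind_eq_some_iff.1 h
    obtain ⟨b', hb', hbc'⟩ := m₂.lift_le hbc hc
    obtain ⟨a', ha', hab'⟩ := m₁.lift_le hb hb'
    exact ⟨a', ha', by rw [hab', Option.bind_some, hbc']⟩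
  commutes a c h := by
    obtain ⟨b, hb, hbc⟩ := Option.bind_eq_some_iff.1 h
    rw [m₁.commutes a b hb, m₂.commutes b c hbc]

theorem comp_f (m₁ : RealMap r s) (m₂ : RealMap s t) (a : r.carrier) :
    (m₁.comp m₂).f a = (m₁.f a).bind m₂.f := rfl

def proj (r : Realisation C) (x : Set r.carrier) (hx : r.IsDown x) :
    RealMap r (r.restrict x hx) where
  f := Function.partialInv (Subtype.val : x → r.carrier)
  surj b := ⟨b.1, Set.partialInv_val_eq_some.2 rfl⟩
  presDown := isDown_pimage_of_lift fun a b b' h hb => by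
    exact ⟨b'.1, Set.partialInv_val_eq_some.1 h ▸ hb, Set.partialInv_val_eq_some.2 rfl⟩
  commutes a b h := by rw [← Set.partialInv_val_eq_some.1 h]

theorem proj_f_eq_some {x : Set r.carrier} {hx : r.IsDown x} {a : r.carrier} {b : x} :
    (proj r x hx).f a = some b ↔ b.1 = a :=
  Set.partialInv_val_eq_some

end RealMap

namespace Realisation.Iso

variable {A : Type u} {C : ConfigFamily A} {r s : Realisation C}

def toRealMap (g : r ≃ᵣ s) : RealMap r s where
  f a := some (g a)
  surj b := ⟨g.symm b, by simp⟩
  presDown := RealMap.isDown_pimage_of_lift fun a _ b' h hb => by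
    cases Option.some_injective _ h
    exact ⟨g.symm b', (g.symm_apply_le _ _).2 hb, by simp⟩
  commutes a _ h := by cases Option.some_injective _ h; exact (g.ρ_eq a).symm

theorem toRealMap_isIso (g : r ≃ᵣ s) : g.toRealMap.IsIso :=
  ⟨g.symm.toRealMap, fun a b => by
    change some (g a) = some b ↔ some (g.symm b) = some a
    simp only [Option.some.injEq]
    exact ⟨fun h => h ▸ g.symm_apply_apply a, fun h => h ▸ g.apply_symm_apply b⟩⟩

end Realisation.Iso

namespace RealMap

variable {A : Type u} {C : ConfigFamily A} {r s : Realisation C}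

theorem IsIso.exists_iso {m : RealMap r s} (hm : m.IsIso) :
    ∃ g : r ≃ᵣ s, ∀ a, m.f a = some (g a) := by
  obtain ⟨m', hmm'⟩ := hm
  choose g hg using fun a => (m'.surj a).imp fun b hb => (hmm' a b).2 hb
  choose g' hg' using fun b => (m.surj b).imp fun a ha => (hmm' a b).1 ha
  have hm'g : ∀ a, m'.f (g a) = some a := fun a => (hmm' _ _).1 (hg a)
  have hg'g : ∀ a, g' (g a) = a := fun a => Option.some_injective _ ((hg' _).symm.trans (hm'g a))
  have hgg' : ∀ b, g (g' b) = b :=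
    fun b => Option.some_injective _ ((hg _).symm.trans ((hmm' _ _).2 (hg' b)))
  refine ⟨⟨⟨g, g', hg'g, hgg'⟩, fun a b => ?_, fun a => (m.commutes _ _ (hg a)).symm⟩, hg⟩
  change r.le a b ↔ s.le (g a) (g b)
  refine ⟨fun hab => ?_, fun hab => ?_⟩
  · obtain ⟨c, hc, hca⟩ := m'.lift_le (hm'g b) hab
    rwa [Option.some_injective _ ((hg a).symm.trans ((hmm' a c).2 hca))]
  · obtain ⟨c, hc, hca⟩ := m.lift_le (hg b) hab
    rwa [← hg'g a, ← Option.some_injective _ ((hg c).symm.trans hca), hg'g]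

theorem isIso_of_iso (m : RealMap r s) (g : r ≃ᵣ s) (hg : ∀ a, m.f a = some (g a)) :
    m.IsIso := by
  obtain ⟨m', hm'⟩ := g.toRealMap_isIso
  exact ⟨m', fun a b => by rw [hg]; exact hm' a b⟩

end RealMap

theorem realIso_iff {A : Type u} {C : ConfigFamily A} {r s : Realisation C} :
    RealIso r s ↔ Nonempty (r ≃ᵣ s) :=
  ⟨fun ⟨_, hm⟩ => hm.exists_iso.elim fun g _ => ⟨g⟩, fun ⟨g⟩ => ⟨_, g.toRealMap_isIso⟩⟩

namespace RealMap

variable {A : Type u} {C : ConfigFamily A} {r s : Realisation C} (m : RealMap r s)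

def dom : Set r.carrier := {a | (m.f a).isSome}

theorem mem_dom_of_eq_some {a : r.carrier} {b : s.carrier} (h : m.f a = some b) : a ∈ m.dom := by
  simp [dom, h]

def glueLe : s.carrier ⊕ ↥m.domᶜ → s.carrier ⊕ ↥m.domᶜ → Prop
  | .inl b, .inl b' => s.le b b'
  | .inl b, .inr c => ∃ a, m.f a = some b ∧ r.le a c
  | .inr _, .inl _ => False
  | .inr c, .inr c' => r.le c c'

def toGlueFun (a : r.carrier) : s.carrier ⊕ ↥m.domᶜ :=
  if h : (m.f a).isSome then .inl ((m.f a).get h) else .inr ⟨a, h⟩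

variable {m}

theorem toGlueFun_of_eq_some {a : r.carrier} {b : s.carrier} (h : m.f a = some b) :
    m.toGlueFun a = .inl b := by
  simp [toGlueFun, h]

theorem toGlueFun_of_not_mem {a : r.carrier} (h : a ∈ m.domᶜ) :
    m.toGlueFun a = .inr ⟨a, h⟩ := by
  simp only [toGlueFun]
  exact dif_neg h

theorem glueLe_toGlueFun_of_le {a c : r.carrier} (hc : c ∈ m.domᶜ) (hac : r.le a c) :
    m.glueLe (m.toGlueFun a) (.inr ⟨c, hc⟩) := by
  by_cases ha : a ∈ m.dom
  · obtain ⟨b, hb⟩ := Option.isSome_iff_exists.1 ha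
    rw [toGlueFun_of_eq_some hb]
    exact ⟨a, hb, hac⟩
  · rw [toGlueFun_of_not_mem ha]
    exact hac

variable (m)

/-- `m` factors as the total map `toGlue m` followed by a projection: `glue m` is `s` together
with the elements outside the domain of `m`, each placed above the images of its predecessors. -/
def glue : Realisation C where
  carrier := s.carrier ⊕ ↥m.domᶜ
  le := m.glueLe
  le_refl
    | .inl b => s.le_refl b
    | .inr c => r.le_refl c.1
  le_trans
    | .inl _, .inl _, .inl _, h₁, h₂ => s.le_trans _ _ _ h₁ h₂
    | .inl _, .inl _, .inr _, h₁, ⟨a, ha, hac⟩ =>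
      let ⟨a', ha', h'⟩ := m.lift_le ha h₁
      ⟨a', h', r.le_trans _ _ _ ha' hac⟩
    | .inl _, .inr _, .inr _, ⟨a, ha, hac⟩, h₂ => ⟨a, ha, r.le_trans _ _ _ hac h₂⟩
    | .inr _, .inr _, .inr _, h₁, h₂ => r.le_trans _ _ _ h₁ h₂
    | .inl _, .inr _, .inl _, _, h₂ => h₂.elim
    | .inr _, .inl _, _, h₁, _ => h₁.elim
    | .inr _, .inr _, .inl _, _, h₂ => h₂.elim
  le_antisymm
    | .inl _, .inl _, h₁, h₂ => congrArg Sum.inl (s.le_antisymm _ _ h₁ h₂)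
    | .inr _, .inr _, h₁, h₂ => congrArg Sum.inr (Subtype.ext (r.le_antisymm _ _ h₁ h₂))
    | .inl _, .inr _, _, h₂ => h₂.elim
    | .inr _, .inl _, h₁, _ => h₁.elim
  finPast
    | .inl b => ((s.finPast b).image Sum.inl).subset fun
        | .inl b', h => ⟨b', h, rfl⟩
        | .inr _, h => h.elim
    | .inr c => ((r.finPast c.1).image m.toGlueFun).subset fun
        | .inl b', ⟨a, ha, hac⟩ => ⟨a, hac, toGlueFun_of_eq_some ha⟩
        | .inr c', h => ⟨c', h, toGlueFun_of_not_mem c'.2⟩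
  ρ := Sum.elim s.ρ fun c : ↥m.domᶜ => r.ρ c
  real y hy := by
    set w : Set r.carrier := {a | ∃ c : ↥m.domᶜ, .inr c ∈ y ∧ r.le a c}
    have hw : r.IsDown w := fun a ⟨c, hc, hac⟩ a' ha' => ⟨c, hc, r.le_trans _ _ _ ha' hac⟩
    have hys : s.IsDown {b | .inl b ∈ y} := fun b hb b' hb' => hy _ hb (.inl b') hb'
    have himage : Sum.elim s.ρ (fun c : ↥m.domᶜ => r.ρ c) '' y =
        s.ρ '' {b | .inl b ∈ y} ∪ r.ρ '' w := by
      refine Set.Subset.antisymm ?_ ?_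
      · rintro _ ⟨(b | c), hy, rfl⟩
        exacts [Or.inl ⟨b, hy, rfl⟩, Or.inr ⟨c, ⟨c, hy, r.le_refl _⟩, rfl⟩]
      · rintro _ (⟨b, hb, rfl⟩ | ⟨a, ⟨c, hc, hac⟩, rfl⟩)
        · exact ⟨_, hb, rfl⟩
        refine ⟨m.toGlueFun a, hy _ hc _ (glueLe_toGlueFun_of_le c.2 hac), ?_⟩
        by_cases ha : a ∈ m.dom
        · obtain ⟨b, hb⟩ := Option.isSome_iff_exists.1 ha
          rw [toGlueFun_of_eq_some hb]
          exact (m.commutes a b hb).symm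
        · rw [toGlueFun_of_not_mem ha]; rfl
    have hsub : s.ρ '' {b | .inl b ∈ y} ⊆ r.ρ '' Set.univ := by
      rintro _ ⟨b, -, rfl⟩
      obtain ⟨a, ha⟩ := m.surj b
      exact ⟨a, trivial, m.commutes a b ha⟩
    rw [himage]
    exact C.union_mem_of_subset (s.real _ hys) (r.real w hw)
      (r.real _ fun _ _ _ _ => trivial) hsub (Set.image_mono (Set.subset_univ _))

def toGlue : RealMap r m.glue where
  f a := some (m.toGlueFun a)
  surj
    | .inl b => let ⟨a, ha⟩ := m.surj b; ⟨a, by rw [toGlueFun_of_eq_some ha]⟩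
    | .inr c => ⟨c, by rw [toGlueFun_of_not_mem c.2]⟩
  presDown := isDown_pimage_of_lift fun a β β' h hβ => by
    cases Option.some_injective _ h
    by_cases ha : a ∈ m.dom
    · obtain ⟨b, hb⟩ := Option.isSome_iff_exists.1 ha
      rw [toGlueFun_of_eq_some hb] at hβ
      obtain (b' | _) := β'
      · obtain ⟨a', ha', hb'⟩ := m.lift_le hb hβ
        exact ⟨a', ha', by rw [toGlueFun_of_eq_some hb']⟩
      · exact hβ.elim
    · rw [toGlueFun_of_not_mem ha] at hβ
      obtain (b' | c') := β'
      · obtain ⟨a', hb', ha'⟩ := hβ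
        exact ⟨a', ha', by rw [toGlueFun_of_eq_some hb']⟩
      · exact ⟨c', hβ, by rw [toGlueFun_of_not_mem c'.2]⟩
  commutes a β h := by
    cases Option.some_injective _ h
    by_cases ha : a ∈ m.dom
    · obtain ⟨b, hb⟩ := Option.isSome_iff_exists.1 ha
      rw [toGlueFun_of_eq_some hb]
      exact m.commutes a b hb
    · rw [toGlueFun_of_not_mem ha]; rfl

theorem toGlue_isTotal : m.toGlue.IsTotal := fun _ => ⟨_, rfl⟩

end RealMap

namespace Realisation.Extremal

variable {A : Type u} {C : ConfigFamily A} {r s : Realisation C}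

theorem exists_iso_dom (hr : r.Extremal) (m : RealMap r s) :
    ∃ hd : r.IsDown m.dom, ∃ g : r.restrict m.dom hd ≃ᵣ s, ∀ a : m.dom, m.f a = some (g a) := by
  -- extremality makes the total part of `m` an isomorphism
  obtain ⟨h, hh⟩ := (hr _ m.toGlue m.toGlue_isTotal).exists_iso
  have hγ : ∀ a, h a = m.toGlueFun a := fun a => Option.some_injective _ (hh a).symm
  let g : m.dom → s.carrier := fun a => (m.f a).get a.2
  have hg : ∀ a : m.dom, m.f a = some (g a) := fun a => (Option.some_get a.2).symm
  have hhg : ∀ a : m.dom, h a = .inl (g a) := fun a => by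
    rw [hγ, RealMap.toGlueFun_of_eq_some (hg a)]
  have hd : r.IsDown m.dom := by
    intro a ha b hb
    have hle := (h.le_iff b a).1 hb
    rw [hhg ⟨a, ha⟩] at hle
    by_contra hbd
    rw [hγ, RealMap.toGlueFun_of_not_mem hbd] at hle
    exact hle
  have hinj : Function.Injective g := fun a a' hgg =>
    Subtype.ext (h.injective (by rw [hhg, hhg, hgg]))
  have hsurj : Function.Surjective g := fun b =>
    let ⟨a, ha⟩ := m.surj b
    ⟨⟨a, m.mem_dom_of_eq_some ha⟩, Option.some_injective _ ((hg _).symm.trans ha)⟩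
  refine ⟨hd, Iso.ofBijective g ⟨hinj, hsurj⟩ (fun a b => ?_) (fun a => ?_), hg⟩
  · rw [h.le_iff, hhg, hhg]
    rfl
  · exact (m.commutes a _ (hg a)).symm

theorem restrict (hr : r.Extremal) (x : Set r.carrier) (hx : r.IsDown x) :
    (r.restrict x hx).Extremal := by
  intro s m hm
  set μ := (RealMap.proj r x hx).comp m
  have hμ : ∀ a : x, μ.f a = m.f a := fun a => by
    rw [RealMap.comp_f, (RealMap.proj_f_eq_some (b := a)).2 rfl, Option.bind_some]
  have hdom : μ.dom = x := by
    ext a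
    refine ⟨fun ha => ?_, fun ha => ?_⟩
    · obtain ⟨c, hc⟩ := Option.isSome_iff_exists.1 ha
      obtain ⟨b, hb, -⟩ := Option.bind_eq_some_iff.1 hc
      exact RealMap.proj_f_eq_some.1 hb ▸ b.2
    · obtain ⟨c, hc⟩ := hm ⟨a, ha⟩
      exact μ.mem_dom_of_eq_some ((hμ ⟨a, ha⟩).trans hc)
  obtain ⟨hd, g, hg⟩ := hr.exists_iso_dom μ
  refine RealMap.isIso_of_iso m ((r.restrictCongr hdom.symm hx hd).trans g) ?_
  intro a
  exact (hμ a).symm.trans (hg ⟨a, by rw [hdom]; exact a.2⟩)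

theorem of_iso (hr : r.Extremal) (g : r ≃ᵣ s) : s.Extremal := by
  intro t m hm
  obtain ⟨k, hk⟩ := (hr t (g.toRealMap.comp m) fun a => hm (g a)).exists_iso
  refine RealMap.isIso_of_iso m (g.symm.trans k) fun b => ?_
  simpa [RealMap.comp_f, Iso.toRealMap] using hk (g.symm b)

theorem exists_iso_past (hr : r.Extremal) (m : RealMap r s) (hs : s.HasTop) :
    ∃ a, Nonempty (r.pastRestrict a ≃ᵣ s) := by
  obtain ⟨hd, g, -⟩ := hr.exists_iso_dom m
  obtain ⟨t, ht⟩ := hs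
  refine ⟨g.symm t, ⟨(r.restrictCongr ?_ _ hd).trans g⟩⟩
  refine (r.past_eq_of_isDown hd (g.symm t).2 fun b hb => ?_).symm
  exact (g.le_symm_apply ⟨b, hb⟩ t).2 (ht _)

end Realisation.Extremal

namespace Realisation

variable {A : Type u} {C : ConfigFamily A} {r r' s t : Realisation C}

def pastTop (r : Realisation C) (a : r.carrier) : (r.pastRestrict a).carrier :=
  ⟨a, r.mem_past_self a⟩

theorem Iso.le_apply_of_forall_le (g : s ≃ᵣ t) {u : s.carrier} (hu : ∀ c, s.le c u)
    (d : t.carrier) : t.le d (g u) :=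
  (g.symm_apply_le u d).1 (hu _)

theorem Iso.apply_eq_of_forall_le {b : r'.carrier} (g : s ≃ᵣ r'.pastRestrict b)
    {u : s.carrier} (hu : ∀ c, s.le c u) : (g u).1 = b :=
  r'.le_antisymm _ _ (g u).2 (g.le_apply_of_forall_le hu (r'.pastTop b))

def Iso.pastRestrict (g : s ≃ᵣ t) (c : s.carrier) :
    s.pastRestrict c ≃ᵣ t.pastRestrict (g c) where
  toEquiv := g.toEquiv.subtypeEquiv fun d => g.le_iff d c
  le_iff d d' := g.le_iff d d'
  ρ_eq d := g.ρ_eq d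

def pastRestrictPastRestrict (a : r.carrier) (c : (r.pastRestrict a).carrier) :
    (r.pastRestrict a).pastRestrict c ≃ᵣ r.pastRestrict c.1 where
  toEquiv :=
    { toFun := fun d => ⟨d.1.1, d.2⟩
      invFun := fun d => ⟨⟨d.1, r.le_trans _ _ _ d.2 c.2⟩, d.2⟩
      left_inv := fun _ => rfl
      right_inv := fun _ => rfl }
  le_iff _ _ := Iff.rfl
  ρ_eq _ := rfl

theorem ncard_past_lt {a c : r.carrier} (hc : r.le c a) (hne : c ≠ a) :
    (r.past c).ncard < (r.past a).ncard := by
  refine Set.ncard_lt_ncard ⟨fun e he => r.le_trans _ _ _ he hc, fun hsub => hne ?_⟩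
    (r.finPast a)
  exact r.le_antisymm _ _ hc (hsub (r.mem_past_self a))

theorem mem_spred {a c : r.carrier} : c ∈ r.spred a ↔ r.le c a ∧ c ≠ a := Iff.rfl

theorem not_le_of_spred_eq {a b : r.carrier} (hne : a ≠ b) (hsp : r.spred a = r.spred b) :
    ¬ r.le a b := fun hab => (hsp ▸ mem_spred.2 ⟨hab, hne⟩ : a ∈ r.spred a).2 rfl

section Twins

variable {a b : r.carrier} (hne : a ≠ b) (hρ : r.ρ a = r.ρ b) (hsp : r.spred a = r.spred b)

def twinsLe (c d : {c // c ≠ a}) : Prop := r.le c d ∨ (r.le c b ∧ r.le a d)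

/-- Merging the twins `a` and `b`: `a` is dropped and whatever lies above it is put above `b`. -/
def mergeTwins : Realisation C where
  carrier := {c // c ≠ a}
  le := twinsLe (b := b)
  le_refl c := Or.inl (r.le_refl c)
  le_trans
    | _, _, _, .inl h₁, .inl h₂ => .inl (r.le_trans _ _ _ h₁ h₂)
    | _, _, _, .inl h₁, .inr ⟨h₂, h₂'⟩ => .inr ⟨r.le_trans _ _ _ h₁ h₂, h₂'⟩
    | _, _, _, .inr ⟨h₁, h₁'⟩, .inl h₂ => .inr ⟨h₁, r.le_trans _ _ _ h₁' h₂⟩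
    | _, _, _, .inr ⟨h₁, _⟩, .inr ⟨_, h₂'⟩ => .inr ⟨h₁, h₂'⟩
  le_antisymm c d h₁ h₂ := by
    have hab := not_le_of_spred_eq hne hsp
    rcases h₁ with h₁ | ⟨h₁, h₁'⟩ <;> rcases h₂ with h₂ | ⟨h₂, h₂'⟩
    · exact Subtype.ext (r.le_antisymm _ _ h₁ h₂)
    · exact (hab (r.le_trans _ _ _ h₂' (r.le_trans _ _ _ h₁ h₂))).elim
    · exact (hab (r.le_trans _ _ _ h₁' (r.le_trans _ _ _ h₂ h₁))).elim
    · exact (hab (r.le_trans _ _ _ h₁' h₂)).elim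
  finPast e := (((r.finPast e).union (r.finPast b)).preimage Subtype.val_injective.injOn).subset
    fun c hc => hc.imp id And.left
  ρ c := r.ρ c
  real y hy := by
    set z : Set r.carrier := Subtype.val '' y ∪ {c | c = a ∧ ⟨b, hne.symm⟩ ∈ y}
    have hz : r.IsDown z := by
      rintro d (⟨d, hd, rfl⟩ | ⟨rfl, hby⟩) c hc
      · by_cases hca : c = a
        · exact .inr ⟨hca, hy d hd _ (.inr ⟨r.le_refl b, hca ▸ hc⟩)⟩
        · exact .inl ⟨⟨c, hca⟩, hy d hd ⟨c, hca⟩ (.inl hc), rfl⟩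
      · by_cases hca : c = d
        · exact .inr ⟨hca, hby⟩
        · have hcb := (mem_spred.1 (hsp ▸ mem_spred.2 ⟨hc, hca⟩ : c ∈ r.spred b)).1
          exact .inl ⟨⟨c, hca⟩, hy _ hby ⟨c, hca⟩ (.inl hcb), rfl⟩
    convert r.real z hz using 1
    refine Set.Subset.antisymm (fun _ ⟨d, hd, hρd⟩ => ⟨d, .inl ⟨d, hd, rfl⟩, hρd⟩) ?_
    rintro _ ⟨c, ⟨c, hc, rfl⟩ | ⟨rfl, hby⟩, rfl⟩
    exacts [⟨c, hc, rfl⟩, ⟨_, hby, hρ.symm⟩]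

open scoped Classical in
def mergeTwinsFun (c : r.carrier) : {c // c ≠ a} :=
  if h : c = a then ⟨b, hne.symm⟩ else ⟨c, h⟩

theorem mergeTwinsFun_of_ne {c : r.carrier} (h : c ≠ a) : mergeTwinsFun hne c = ⟨c, h⟩ :=
  dif_neg h

theorem mergeTwinsFun_self : mergeTwinsFun hne a = ⟨b, hne.symm⟩ := dif_pos rfl

include hsp in
theorem exists_le_mergeTwinsFun_eq {c : r.carrier} {d : {c // c ≠ a}}
    (hd : twinsLe (b := b) d (mergeTwinsFun hne c)) :
    ∃ c', r.le c' c ∧ mergeTwinsFun hne c' = d := by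
  by_cases hdb : d.1 = b
  · by_cases hca : c = a
    · exact ⟨a, hca ▸ r.le_refl a, by rw [mergeTwinsFun_self]; exact Subtype.ext hdb.symm⟩
    rw [mergeTwinsFun_of_ne hne hca] at hd
    rcases hd with hd | ⟨-, hac⟩
    · exact ⟨d, hd, mergeTwinsFun_of_ne hne d.2⟩
    · exact ⟨a, hac, by rw [mergeTwinsFun_self]; exact Subtype.ext hdb.symm⟩
  · refine ⟨d, ?_, mergeTwinsFun_of_ne hne d.2⟩
    have hda : r.le d b → r.le d a :=
      fun h => (mem_spred.1 (hsp.symm ▸ mem_spred.2 ⟨h, hdb⟩ : d.1 ∈ r.spred a)).1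
    by_cases hca : c = a
    · subst hca
      rw [mergeTwinsFun_self] at hd
      rcases hd with hd | ⟨hd, -⟩ <;> exact hda hd
    · rw [mergeTwinsFun_of_ne hne hca] at hd
      rcases hd with hd | ⟨hd, hac⟩
      exacts [hd, r.le_trans _ _ _ (hda hd) hac]

def toMergeTwins : RealMap r (mergeTwins hne hρ hsp) where
  f c := some (mergeTwinsFun hne c)
  surj d := ⟨d.1, by rw [mergeTwinsFun_of_ne hne d.2]; rfl⟩
  presDown := RealMap.isDown_pimage_of_lift fun c _ d h hd => by
    cases Option.some_injective _ h
    obtain ⟨c', hc', rfl⟩ := exists_le_mergeTwinsFun_eq hne hsp hd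
    exact ⟨c', hc', rfl⟩
  commutes c d h := by
    cases Option.some_injective _ h
    by_cases hca : c = a
    · subst hca
      rw [mergeTwinsFun_self]
      exact hρ
    · rw [mergeTwinsFun_of_ne hne hca]
      rfl

end Twins

/-- Otherwise `toMergeTwins` would be a total map identifying `a` and `b`. -/
theorem Extremal.eq_of_spred_eq (hr : r.Extremal) {a b : r.carrier} (hρ : r.ρ a = r.ρ b)
    (hsp : r.spred a = r.spred b) : a = b := by
  by_contra hne
  obtain ⟨g, hg⟩ := (hr _ (toMergeTwins hne hρ hsp) fun _ => ⟨_, rfl⟩).exists_iso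
  have hga : g a = mergeTwinsFun hne a := Option.some_injective _ (hg a).symm
  have hgb : g b = mergeTwinsFun hne b := Option.some_injective _ (hg b).symm
  refine hne (g.injective ?_)
  rw [hga, hgb, mergeTwinsFun_self, mergeTwinsFun_of_ne hne (Ne.symm hne)]

/-- By induction on the size of the past, `g` fixes the strict predecessors of `a`, so `a` and
`b` are twins. -/
theorem Extremal.eq_of_iso_past (hr : r.Extremal) {a b : r.carrier}
    (g : r.pastRestrict a ≃ᵣ r.pastRestrict b) : a = b := by
  induction hn : (r.past a).ncard using Nat.strong_induction_on generalizing a b with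
  | _ n ih =>
  have hfix : ∀ c : r.past a, c.1 ≠ a → (g c).1 = c.1 := fun c hc =>
    (ih _ (hn ▸ ncard_past_lt c.2 hc) (((r.pastRestrictPastRestrict a c).symm.trans
      (g.pastRestrict c)).trans (r.pastRestrictPastRestrict b (g c))) rfl).symm
  have htop : g (r.pastTop a) = r.pastTop b := Subtype.ext (g.apply_eq_of_forall_le fun c => c.2)
  refine hr.eq_of_spred_eq ?_ (Set.Subset.antisymm ?_ ?_)
  · have hρ := g.ρ_eq (r.pastTop a)
    rw [htop] at hρ
    exact hρ.symm
  · rintro c ⟨hca, hne⟩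
    have hc : (g ⟨c, hca⟩).1 = c := hfix ⟨c, hca⟩ hne
    refine ⟨hc ▸ (g ⟨c, hca⟩).2, fun hcb => hne ?_⟩
    have : g ⟨c, hca⟩ = g (r.pastTop a) := by rw [htop]; exact Subtype.ext (hc.trans hcb)
    exact congrArg Subtype.val (g.injective this)
  · rintro d ⟨hdb, hne⟩
    set e := g.symm ⟨d, hdb⟩
    have hge : (g e).1 = d := by rw [Iso.apply_symm_apply]
    have hea : e.1 ≠ a := fun h => hne <| by
      rw [← hge, show e = r.pastTop a from Subtype.ext h, htop]
      rfl
    have hed : e.1 = d := (hfix e hea).symm.trans hge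
    exact ⟨hed ▸ e.2, fun hda => hea (hed.trans hda)⟩

end Realisation

namespace RealMap

variable {A : Type u} {C : ConfigFamily A} {r s : Realisation C}

theorem card_le [Finite r.carrier] (m : RealMap r s) :
    Nat.card s.carrier ≤ Nat.card r.carrier := by
  refine (Nat.card_le_card_of_surjective (fun a : m.dom => (m.f a).get a.2) fun b => ?_).trans
    (Finite.card_subtype_le _)
  obtain ⟨a, ha⟩ := m.surj b
  exact ⟨⟨a, m.mem_dom_of_eq_some ha⟩, by simp [ha]⟩

def restrict (m : RealMap r s) (x : Set r.carrier) (hx : r.IsDown x) :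
    RealMap (r.restrict x hx) (s.restrict (pimage m.f x) (m.presDown x hx)) where
  f c := (m.f c).pmap (fun b hb => ⟨b, hb⟩) fun _ hb => ⟨c, c.2, hb⟩
  surj := fun ⟨_, c, hc, hcb⟩ => ⟨⟨c, hc⟩, by simp [hcb]⟩
  presDown := isDown_pimage_of_lift fun c d d' h hd => by
    obtain ⟨b, _, hb, hdb⟩ := Option.pmap_eq_some_iff.1 h
    subst hdb
    obtain ⟨c', hc', hb'⟩ := m.lift_le hb hd
    exact ⟨⟨c', hx c c.2 c' hc'⟩, hc', Option.pmap_eq_some_iff.2 ⟨d'.1, d'.2, hb', rfl⟩⟩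
  commutes c d h := by
    obtain ⟨b, -, hb, rfl⟩ := Option.pmap_eq_some_iff.1 h
    exact m.commutes c b hb

theorem restrict_f_of_eq_some (m : RealMap r s) {x : Set r.carrier} {hx : r.IsDown x} {c : x}
    {b : s.carrier} (hb : m.f c = some b) :
    (m.restrict x hx).f c = some ⟨b, c, c.2, hb⟩ := by
  simp [restrict, hb]

end RealMap

namespace Realisation

variable {A : Type u} {C : ConfigFamily A} {r s : Realisation C}

theorem Extremal.isIso_of_card_le (hr : r.Extremal) [Finite r.carrier] (m : RealMap r s)
    (h : Nat.card r.carrier ≤ Nat.card s.carrier) : m.IsIso := by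
  obtain ⟨hd, g, hg⟩ := hr.exists_iso_dom m
  have hdom : m.dom = Set.univ := by
    refine Set.eq_of_subset_of_ncard_le (Set.subset_univ _) ?_ Set.finite_univ
    rw [Set.ncard_univ, ← Nat.card_coe_set_eq, Nat.card_congr g.toEquiv]
    exact h
  exact hr s m fun a => ⟨_, hg ⟨a, hdom ▸ trivial⟩⟩

theorem extremal_of_past (hpast : ∀ a, (r.pastRestrict a).Extremal)
    (hinj : ∀ a b, Nonempty (r.pastRestrict a ≃ᵣ r.pastRestrict b) → a = b) : r.Extremal := by
  intro s m hm
  choose f hf using hm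
  have hiso : ∀ a, ∃ g : r.pastRestrict a ≃ᵣ s.restrict (pimage m.f (r.past a)) _,
      ∀ c, (g c).1 = f c := fun a => by
    obtain ⟨g, hg⟩ := (hpast a _ (m.restrict _ _)
      fun c => ⟨_, m.restrict_f_of_eq_some (hf c)⟩).exists_iso
    refine ⟨g, fun c => ?_⟩
    have hgc := hg c
    rw [m.restrict_f_of_eq_some (hf c), Option.some_inj] at hgc
    exact congrArg Subtype.val hgc.symm
  choose g hg using hiso
  have himage : ∀ a, pimage m.f (r.past a) = s.past (f a) := fun a =>
    s.past_eq_of_isDown (m.presDown _ (r.isDown_past a)) ⟨a, r.mem_past_self a, hf a⟩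
      fun d hd => hg a (r.pastTop a) ▸
        (g a).le_apply_of_forall_le (u := r.pastTop a) (fun c => c.2) ⟨d, hd⟩
  have hpastIso : ∀ a, r.pastRestrict a ≃ᵣ s.pastRestrict (f a) := fun a =>
    (g a).trans (s.restrictCongr (himage a) _ _)
  have hfinj : Function.Injective f := fun a b hab => hinj a b
    ⟨((hpastIso a).trans (s.restrictCongr (congrArg s.past hab) _ _)).trans (hpastIso b).symm⟩
  refine RealMap.isIso_of_iso m (Iso.ofBijective f ⟨hfinj, fun b => ?_⟩ (fun a b => ?_)
    fun a => (m.commutes a _ (hf a)).symm) hf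
  · obtain ⟨a, ha⟩ := m.surj b
    exact ⟨a, Option.some_injective _ ((hf a).symm.trans ha)⟩
  refine ⟨fun hab => (himage b ▸ ⟨a, hab, hf a⟩ : f a ∈ s.past (f b)), fun hab => ?_⟩
  obtain ⟨c, hc, hca⟩ : f a ∈ pimage m.f (r.past b) := (himage b).symm ▸ hab
  exact hfinj (Option.some_injective _ ((hf c).symm.trans hca)) ▸ hc

theorem HasTop.finite (h : r.HasTop) : Finite r.carrier :=
  let ⟨t, ht⟩ := h
  Set.finite_univ_iff.1 ((r.finPast t).subset fun c _ => ht c)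

theorem Extremal.primeExtremal_pastRestrict (hr : r.Extremal) (a : r.carrier) :
    (r.pastRestrict a).PrimeExtremal :=
  ⟨hr.restrict _ _, r.pastTop a, fun c => c.2⟩

/-- Finite realisations are coded, up to isomorphism, in `Type u`, so that the set of chosen
primes is `u`-small. -/
abbrev FinCode (A : Type u) : Type u := Σ n : ℕ, (Fin n → Fin n → Prop) × (Fin n → A)

def IsCodedBy (r : Realisation C) (c : FinCode A) : Prop :=
  ∃ e : Fin c.1 ≃ r.carrier, (∀ i j, c.2.1 i j ↔ r.le (e i) (e j)) ∧ ∀ i, r.ρ (e i) = c.2.2 i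

theorem exists_isCodedBy [Finite r.carrier] : ∃ c, r.IsCodedBy c := by
  obtain ⟨n, ⟨e⟩⟩ := Finite.exists_equiv_fin r.carrier
  exact ⟨⟨n, fun i j => r.le (e.symm i) (e.symm j), fun i => r.ρ (e.symm i)⟩,
    e.symm, fun _ _ => Iff.rfl, fun _ => rfl⟩

theorem IsCodedBy.nonempty_iso {c : FinCode A} (h : r.IsCodedBy c) (h' : s.IsCodedBy c) :
    Nonempty (r ≃ᵣ s) := by
  obtain ⟨e, hle, hρ⟩ := h
  obtain ⟨e', hle', hρ'⟩ := h'
  refine ⟨⟨e.symm.trans e', fun a b => ?_, fun a => ?_⟩⟩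
  · calc r.le a b ↔ c.2.1 (e.symm a) (e.symm b) := by
          rw [hle, e.apply_symm_apply, e.apply_symm_apply]
      _ ↔ _ := hle' _ _
  · exact (hρ' _).trans ((hρ _).symm.trans (congrArg r.ρ (e.apply_symm_apply a)))

end Realisation

section Unfolding

variable {A : Type u} {C : ConfigFamily A} {P : Set (Realisation C)} {r r' : Realisation C}

def primesBelow (P : Set (Realisation C)) (r : Realisation C) : Set ↥P :=
  {p | Nonempty (RealMap r p.val)}

theorem primesBelow_dnClosed (r : Realisation C) : DnClosed (erLe P) (primesBelow P r) :=
  fun _ ⟨mq⟩ _ ⟨mpq⟩ => ⟨mq.comp mpq⟩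

theorem erLe_refl (p : ↥P) : erLe P p p := ⟨RealMap.id _⟩

theorem erLe_trans {p q w : ↥P} : erLe P p q → erLe P q w → erLe P p w :=
  fun ⟨m⟩ ⟨m'⟩ => ⟨m'.comp m⟩

namespace erChoice

variable (hP : erChoice P)
include hP

theorem eq_of_iso {p q : ↥P} (g : p.1 ≃ᵣ q.1) : p = q := by
  obtain ⟨z, -, hz⟩ := hP.2 q.1 (hP.1 q.1 q.2)
  exact Subtype.ext ((hz _ ⟨p.2, realIso_iff.2 ⟨g⟩⟩).trans
    (hz _ ⟨q.2, realIso_iff.2 ⟨Iso.refl _⟩⟩).symm)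

theorem erLe_antisymm {p q : ↥P} (h : erLe P p q) (h' : erLe P q p) : p = q := by
  obtain ⟨m⟩ := h
  obtain ⟨m'⟩ := h'
  have hq := hP.1 _ q.2
  have := hq.2.finite
  have := (hP.1 _ p.2).2.finite
  obtain ⟨g⟩ := realIso_iff.1 ⟨m, hq.1.isIso_of_card_le m m'.card_le⟩
  exact (hP.eq_of_iso g).symm

theorem small : Small.{u} ↥P :=
  small_of_injective (f := fun p : ↥P => {c : FinCode A | p.1.IsCodedBy c}) fun p q h => by
    have := (hP.1 _ p.2).2.finite
    obtain ⟨c, hc⟩ := p.1.exists_isCodedBy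
    obtain ⟨g⟩ := hc.nonempty_iso ((Set.ext_iff.1 h c).1 hc)
    exact hP.eq_of_iso g

end erChoice

/-- The chosen prime isomorphic to the past of `a`. -/
def erPrime (hP : erChoice P) (hr : r.Extremal) (a : r.carrier) : ↥P :=
  ⟨_, (hP.2 _ (hr.primeExtremal_pastRestrict a)).exists.choose_spec.1⟩

section erPrime

variable (hP : erChoice P) (hr : r.Extremal)

theorem nonempty_erPrime_iso (a : r.carrier) :
    Nonempty ((erPrime hP hr a).1 ≃ᵣ r.pastRestrict a) :=
  realIso_iff.1 (hP.2 _ (hr.primeExtremal_pastRestrict a)).exists.choose_spec.2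

theorem eq_erPrime_of_iso {p : ↥P} {a : r.carrier} (g : p.1 ≃ᵣ r.pastRestrict a) :
    p = erPrime hP hr a :=
  let ⟨g'⟩ := nonempty_erPrime_iso hP hr a
  hP.eq_of_iso (g.trans g'.symm)

theorem erPrime_injective : Function.Injective (erPrime hP hr) := fun a b h => by
  obtain ⟨ga⟩ := nonempty_erPrime_iso hP hr a
  obtain ⟨gb⟩ := nonempty_erPrime_iso hP hr b
  rw [h] at ga
  exact hr.eq_of_iso_past (ga.symm.trans gb)

theorem erPrime_mem_primesBelow (a : r.carrier) : erPrime hP hr a ∈ primesBelow P r :=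
  let ⟨g⟩ := nonempty_erPrime_iso hP hr a
  ⟨(RealMap.proj r _ _).comp g.symm.toRealMap⟩

theorem primesBelow_eq_range : primesBelow P r = Set.range (erPrime hP hr) := by
  refine Set.Subset.antisymm (fun p ⟨m⟩ => ?_)
    (Set.range_subset_iff.2 (erPrime_mem_primesBelow hP hr))
  obtain ⟨a, ⟨g⟩⟩ := hr.exists_iso_past m (hP.1 _ p.2).2
  exact ⟨a, (eq_erPrime_of_iso hP hr g.symm).symm⟩

theorem erLe_erPrime_iff {a b : r.carrier} :
    erLe P (erPrime hP hr a) (erPrime hP hr b) ↔ r.le a b := by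
  obtain ⟨ga⟩ := nonempty_erPrime_iso hP hr a
  obtain ⟨gb⟩ := nonempty_erPrime_iso hP hr b
  refine ⟨fun ⟨m⟩ => ?_, fun hab => ?_⟩
  · obtain ⟨c, ⟨g⟩⟩ := (hr.restrict _ _).exists_iso_past
      (gb.symm.toRealMap.comp (m.comp ga.toRealMap)) ⟨r.pastTop a, fun c => c.2⟩
    exact hr.eq_of_iso_past ((r.pastRestrictPastRestrict b c).symm.trans g) ▸ c.2
  · exact ⟨(gb.toRealMap.comp (RealMap.proj _ _ _)).comp
      ((r.pastRestrictPastRestrict b ⟨a, hab⟩).toRealMap.comp ga.symm.toRealMap)⟩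

theorem mx_erPrime {mx : ↥P → A} (hmx : erMax mx) (a : r.carrier) :
    mx (erPrime hP hr a) = r.ρ a := by
  obtain ⟨g⟩ := nonempty_erPrime_iso hP hr a
  obtain ⟨t, ht, hmxt⟩ := hmx (erPrime hP hr a)
  rw [hmxt, ← g.ρ_eq t]
  exact congrArg r.ρ (g.apply_eq_of_forall_le ht)

end erPrime

theorem erChoice.finite_setOf_erLe (hP : erChoice P) (q : ↥P) : {p | erLe P p q}.Finite := by
  have hq := hP.1 _ q.2
  have := hq.2.finite
  change (primesBelow P q.1).Finite
  rw [primesBelow_eq_range hP hq.1]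
  exact Set.finite_range _

variable {mx : ↥P → A}

theorem primesBelow_mem_cfgs (hP : erChoice P) (eqA : A → A → Prop) (hmx : erMax mx)
    (hr : r.Extremal) : primesBelow P r ∈ Cfgs (erData P eqA mx) := by
  refine ⟨primesBelow_dnClosed r, fun X hX hXfin => ⟨hXfin, ?_⟩⟩
  set w : Set r.carrier := {a | ∃ q ∈ X, erLe P (erPrime hP hr a) q}
  have hw : r.IsDown w := fun a ⟨q, hq, haq⟩ b hba =>
    ⟨q, hq, erLe_trans ((erLe_erPrime_iff hP hr).2 hba) haq⟩
  have hdown : {p | ∃ q ∈ X, erLe P p q} = erPrime hP hr '' w := by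
    refine Set.Subset.antisymm (fun p ⟨q, hq, hpq⟩ => ?_) fun _ ⟨a, ha, h⟩ => h ▸ ha
    have hp := primesBelow_dnClosed r q (hX hq) p hpq
    rw [primesBelow_eq_range hP hr] at hp
    obtain ⟨a, rfl⟩ := hp
    exact ⟨a, ⟨q, hq, hpq⟩, rfl⟩
  rw [hdown, Set.image_image, Set.image_congr fun a _ => mx_erPrime hP hr hmx a]
  exact r.real w hw

theorem nonempty_realMap_of_primesBelow_subset (hP : erChoice P) (hmx : erMax mx)
    (hr : r.Extremal) (hr' : r'.Extremal) (h : primesBelow P r' ⊆ primesBelow P r) :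
    Nonempty (RealMap r r') := by
  set φ := erPrime hP hr
  set φ' := erPrime hP hr'
  have hφ' : ∀ a b, Function.partialInv φ' (φ a) = some b ↔ φ' b = φ a :=
    fun a b => (erPrime_injective hP hr').isPartialInv b (φ a)
  refine ⟨⟨fun a => Function.partialInv φ' (φ a), fun b => ?_,
    RealMap.isDown_pimage_of_lift fun a b b' hab hb => ?_, fun a b hab => ?_⟩⟩
  · have hb := h (erPrime_mem_primesBelow hP hr' b)
    rw [primesBelow_eq_range hP hr] at hb
    obtain ⟨a, ha⟩ := hb
    exact ⟨a, (hφ' a b).2 ha.symm⟩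
  · have hb' : erLe P (φ' b') (φ a) := (hφ' a b).1 hab ▸ (erLe_erPrime_iff hP hr').2 hb
    have ha' := primesBelow_dnClosed r _ (erPrime_mem_primesBelow hP hr a) _ hb'
    rw [primesBelow_eq_range hP hr] at ha'
    obtain ⟨a', ha'⟩ := ha'
    exact ⟨a', (erLe_erPrime_iff hP hr).1 (ha' ▸ hb'), (hφ' a' b').2 ha'.symm⟩
  · rw [← mx_erPrime hP hr hmx a, ← mx_erPrime hP hr' hmx b]
    exact congrArg mx ((hφ' a b).1 hab).symm

theorem image_mem_of_mem_cfgs {eqA : A → A → Prop} {x : Set ↥P}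
    (hx : x ∈ Cfgs (erData P eqA mx)) : mx '' x ∈ C.F := by
  have hunion : mx '' x =
      ⋃ I : Finset x, mx '' {p | ∃ q ∈ Subtype.val '' (I : Set x), erLe P p q} := by
    refine Set.Subset.antisymm ?_ (Set.iUnion_subset fun I => Set.image_mono ?_)
    · rintro _ ⟨p, hp, rfl⟩
      exact Set.mem_iUnion.2 ⟨{⟨p, hp⟩}, p, ⟨p, ⟨⟨p, hp⟩, by simp, rfl⟩, erLe_refl p⟩, rfl⟩
    · rintro p ⟨_, ⟨q, -, rfl⟩, hpq⟩
      exact hx.1 q q.2 p hpq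
  rw [hunion]
  refine C.iUnion_mem_of_monotone (fun I J hIJ => Set.image_mono ?_) fun I => ?_
  · rintro p ⟨_, ⟨q, hq, rfl⟩, hpq⟩
    exact ⟨q, ⟨q, hIJ hq, rfl⟩, hpq⟩
  · refine (hx.2 _ ?_ ((I.finite_toSet).image _)).2
    rintro _ ⟨q, -, rfl⟩
    exact q.2

end Unfolding

section CfgRealisation

variable {A : Type u} {C : ConfigFamily A} {P : Set (Realisation C)} {eqA : A → A → Prop}
  {mx : ↥P → A} (hP : erChoice P) {x : Set ↥P} (hx : x ∈ Cfgs (erData P eqA mx)) [Small.{u} x]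

/-- The realisation `(x, ⪯)` labelled by `mx`, on a copy of `x` in `Type u`. -/
def cfgRealisation : Realisation C where
  carrier := Shrink.{u} x
  le c d := erLe P ((equivShrink x).symm c).1 ((equivShrink x).symm d).1
  le_refl _ := erLe_refl _
  le_trans _ _ _ := erLe_trans
  le_antisymm _ _ h h' :=
    (equivShrink x).symm.injective (Subtype.ext (hP.erLe_antisymm h h'))
  finPast c := (hP.finite_setOf_erLe ((equivShrink x).symm c).1).preimage
    (f := fun d => ((equivShrink x).symm d).1)
    (Subtype.val_injective.comp (equivShrink x).symm.injective).injOn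
  ρ c := mx ((equivShrink x).symm c).1
  real y hy := by
    rw [← Set.image_image mx]
    refine image_mem_of_mem_cfgs ⟨?_, fun X hX => hx.2 X (hX.trans ?_)⟩
    · rintro _ ⟨c, hc, rfl⟩ p hp
      have hpx : p ∈ x := hx.1 _ ((equivShrink x).symm c).2 p hp
      refine ⟨equivShrink x ⟨p, hpx⟩, hy c hc _ ?_, by simp⟩
      rw [Equiv.symm_apply_apply]
      exact hp
    · rintro _ ⟨c, -, rfl⟩
      exact ((equivShrink x).symm c).2

theorem cfgRealisation_le_iff (p q : x) :
    (cfgRealisation hP hx).le (equivShrink x p) (equivShrink x q) ↔ erLe P p.1 q.1 := by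
  simp [cfgRealisation]

theorem cfgRealisation_ρ (p : x) : (cfgRealisation hP hx).ρ (equivShrink x p) = mx p.1 := by
  simp [cfgRealisation]

theorem nonempty_iso_pastRestrict_cfgRealisation (hmx : erMax mx) (q : x) :
    Nonempty (q.1.1 ≃ᵣ (cfgRealisation hP hx).pastRestrict (equivShrink x q)) := by
  have hr := (hP.1 _ q.1.2).1
  have hmem : ∀ a, erPrime hP hr a ∈ x :=
    fun a => hx.1 q q.2 _ (erPrime_mem_primesBelow hP hr a)
  let F : q.1.1.carrier → (cfgRealisation hP hx).carrier :=
    fun a => equivShrink x ⟨erPrime hP hr a, hmem a⟩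
  have hF : ∀ a, ((equivShrink x).symm (F a)).1 = erPrime hP hr a := fun a => by simp [F]
  have hFle : ∀ a d, (cfgRealisation hP hx).le (F a) d ↔
      erLe P (erPrime hP hr a) ((equivShrink x).symm d).1 :=
    fun a d => by change erLe P _ _ ↔ _; rw [hF]
  have hFc : ∀ a, F a ∈ (cfgRealisation hP hx).past (equivShrink x q) := fun a =>
    (hFle a _).2 (by rw [Equiv.symm_apply_apply]; exact erPrime_mem_primesBelow hP hr a)
  refine ⟨Iso.ofBijective (fun a => ⟨F a, hFc a⟩)
    ⟨fun a b hab => ?_, fun ⟨d, hd⟩ => ?_⟩ (fun a b => ?_) fun a => ?_⟩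
  · apply erPrime_injective hP hr
    rw [← hF a, ← hF b]
    exact congrArg (fun d => ((equivShrink x).symm d.1).1) hab
  · have hd' : erLe P ((equivShrink x).symm d).1 ((equivShrink x).symm (equivShrink x q)).1 :=
      hd
    rw [Equiv.symm_apply_apply] at hd'
    change _ ∈ primesBelow P q.1.1 at hd'
    rw [primesBelow_eq_range hP hr] at hd'
    obtain ⟨a, ha⟩ := hd'
    exact ⟨a, Subtype.ext ((equivShrink x).symm.injective (Subtype.ext ((hF a).trans ha)))⟩
  · change _ ↔ (cfgRealisation hP hx).le (F a) (F b)
    rw [hFle, hF]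
    exact (erLe_erPrime_iff hP hr).symm
  · change mx ((equivShrink x).symm (F a)).1 = _
    rw [hF]
    exact mx_erPrime hP hr hmx a

theorem nonempty_iso_pastRestrict_cfgRealisation' (hmx : erMax mx) (c : Shrink.{u} x) :
    Nonempty (((equivShrink x).symm c).1.1 ≃ᵣ (cfgRealisation hP hx).pastRestrict c) := by
  have h := nonempty_iso_pastRestrict_cfgRealisation hP hx hmx ((equivShrink x).symm c)
  rwa [Equiv.apply_symm_apply] at h

theorem cfgRealisation_extremal (hmx : erMax mx) : (cfgRealisation hP hx).Extremal := by
  refine extremal_of_past (fun c => ?_) fun c d ⟨g⟩ => ?_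
  · obtain ⟨gc⟩ := nonempty_iso_pastRestrict_cfgRealisation' hP hx hmx c
    exact (hP.1 _ ((equivShrink x).symm c).1.2).1.of_iso gc
  · obtain ⟨gc⟩ := nonempty_iso_pastRestrict_cfgRealisation' hP hx hmx c
    obtain ⟨gd⟩ := nonempty_iso_pastRestrict_cfgRealisation' hP hx hmx d
    exact (equivShrink x).symm.injective
      (Subtype.ext (hP.eq_of_iso ((gc.trans g).trans gd.symm)))

theorem primesBelow_cfgRealisation (hmx : erMax mx) :
    primesBelow P (cfgRealisation hP hx) = x := by
  refine Set.Subset.antisymm (fun q ⟨m⟩ => ?_) fun q hq => ?_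
  · obtain ⟨c, ⟨g⟩⟩ := (cfgRealisation_extremal hP hx hmx).exists_iso_past m (hP.1 _ q.2).2
    obtain ⟨gc⟩ := nonempty_iso_pastRestrict_cfgRealisation' hP hx hmx c
    exact hP.eq_of_iso (g.symm.trans gc.symm) ▸ ((equivShrink x).symm c).2
  · obtain ⟨g⟩ := nonempty_iso_pastRestrict_cfgRealisation hP hx hmx ⟨q, hq⟩
    exact ⟨(RealMap.proj _ _ _).comp g.symm.toRealMap⟩

end CfgRealisation

end

theorem stmt9_general {A : Type u} (C : ConfigFamily A) (eqA : A → A → Prop)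
    (P : Set (Realisation C)) (hP : erChoice P)
    (mx : ↥P → A) (hmx : erMax mx) :
    (∀ r : Realisation C, r.Extremal →
        {p : ↥P | Nonempty (RealMap r p.val)} ∈ Cfgs (erData P eqA mx)) ∧
    (∀ r r' : Realisation C, r.Extremal → r'.Extremal →
        (Nonempty (RealMap r r') ↔
          {p : ↥P | Nonempty (RealMap r' p.val)} ⊆
            {p : ↥P | Nonempty (RealMap r p.val)})) ∧
    (∀ x ∈ Cfgs (erData P eqA mx), ∃ r : Realisation C, r.Extremal ∧
        {p : ↥P | Nonempty (RealMap r p.val)} = x ∧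
        ∃ e : ↥x ≃ r.carrier,
          (∀ p q : ↥x, erLe P p.val q.val ↔ r.le (e p) (e q)) ∧
          ∀ p : ↥x, r.ρ (e p) = mx p.val) := by
  refine ⟨fun r hr => primesBelow_mem_cfgs hP eqA hmx hr, fun r r' hr hr' =>
    ⟨fun ⟨m⟩ _ ⟨m'⟩ => ⟨m.comp m'⟩, nonempty_realMap_of_primesBelow_subset hP hmx hr hr'⟩,
    fun x hx => ?_⟩
  have := hP.small
  exact ⟨cfgRealisation hP hx, cfgRealisation_extremal hP hx hmx,
    primesBelow_cfgRealisation hP hx hmx, equivShrink x,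
    fun p q => (cfgRealisation_le_iff hP hx p q).symm, cfgRealisation_ρ hP hx⟩

/-- The configurations of the causal unfolding `er(A)`, ordered by inclusion,
are order-isomorphic to the order of extremal realisations: the assignment
`θ r = {p ∈ P : p ⪯ r}` sends extremal realisations to configurations,
preserves and reflects the order, and every configuration `x` arises as `θ r`
for an extremal realisation `r` isomorphic to the realisation with carrier
`(x, ⪯)` and function `max`. -/
theorem stmt9 {A : Type u} (C : ConfigFamily A) (eqA : A → A → Prop)
    (heq : Equivalence eqA) (P : Set (Realisation C)) (hP : erChoice P)
    (mx : ↥P → A) (hmx : erMax mx) :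
    (∀ r : Realisation C, r.Extremal →
        {p : ↥P | Nonempty (RealMap r p.val)} ∈ Cfgs (erData P eqA mx)) ∧
    (∀ r r' : Realisation C, r.Extremal → r'.Extremal →
        (Nonempty (RealMap r r') ↔
          {p : ↥P | Nonempty (RealMap r' p.val)} ⊆
            {p : ↥P | Nonempty (RealMap r p.val)})) ∧
    (∀ x ∈ Cfgs (erData P eqA mx), ∃ r : Realisation C, r.Extremal ∧
        {p : ↥P | Nonempty (RealMap r p.val)} = x ∧
        ∃ e : ↥x ≃ r.carrier,
          (∀ p q : ↥x, erLe P p.val q.val ↔ r.le (e p) (e q)) ∧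
          ∀ p : ↥x, r.ρ (e p) = mx p.val) :=
  stmt9_general C eqA P hP mx hmx
end

section
/- Let (A, ≤_A, Con_A) be a prime event structure with family of configurations C(A). For an extremal realisation (R,≤_R),ρ of C(A), the function ρ : R → ρR is an order isomorphism between (R,≤_R) and the configuration ρR ∈ C(A) ordered by the restriction of ≤_A. Moreover the function sending an extremal realisation (R,≤_R),ρ to the configuration ρR is an order isomorphism from the order of extremal realisations of C(A) to the configurations of A ordered by inclusion, under which prime extremal realisations correspond exactly to the complete primes of C(A), i.e. the configurations of the form [e] for an event e. -/
universe u v w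

/-- The data of a prime event structure. -/
structure PESData (E : Type u) where
  le : E → E → Prop
  Con : Set (Set E)

/-- The axioms of a prime event structure. -/
structure IsPES {E : Type u} (D : PESData E) : Prop where
  le_refl : ∀ a, D.le a a
  le_trans : ∀ a b c, D.le a b → D.le b c → D.le a c
  le_antisymm : ∀ a b, D.le a b → D.le b a → a = b
  finCause : ∀ e, {e' | D.le e' e}.Finite
  con_fin : ∀ X ∈ D.Con, X.Finite
  con_single : ∀ e, ({e} : Set E) ∈ D.Con
  con_mono : ∀ X Y, X ⊆ Y → Y ∈ D.Con → X ∈ D.Con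
  con_le : ∀ X ∈ D.Con, ∀ e e', D.le e e' → e' ∈ X → X ∪ {e} ∈ D.Con

/-!
An extremal realisation cannot be compressed any further, so it must coincide with the
configuration `ρR` it realises, carrying the causal order of `A`: the evident total map onto
that configuration is an isomorphism by extremality, and maps of realisations reflect the
order. Conversely a configuration, ordered by `≤_A`, is extremal because any total map out
of it is forced to be a bijection by `ρ`. Once extremal realisations are identified with
configurations, maps between them are just reverse inclusions of configurations, and a top
element of `R` is an event `e` with `ρR = [e]`.
-/

theorem IsCfg.of_subset {P : Type u} {le : P → P → Prop} {Con : Set (Set P)} {x y : Set P}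
    (hx : IsCfg le Con x) (hyx : y ⊆ x) (hy : DnClosed le y) : IsCfg le Con y :=
  ⟨hy, fun X hX hXf => hx.2 X (hX.trans hyx) hXf⟩

namespace Realisation

variable {A : Type u} {C : ConfigFamily A}

theorem isDown_le (r : Realisation C) (b : r.carrier) : r.IsDown {a | r.le a b} :=
  fun _ ha _ hc => r.le_trans _ _ _ hc ha

theorem range_mem (r : Realisation C) : Set.range r.ρ ∈ C.F := by
  simpa using r.real Set.univ fun _ _ b _ => Set.mem_univ b

theorem hasTop_iff_range_eq {le : A → A → Prop} (hrefl : ∀ e, le e e) (r : Realisation C)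
    (hle : ∀ a b, r.le a b ↔ le (r.ρ a) (r.ρ b)) (hdown : DnClosed le (Set.range r.ρ)) :
    r.HasTop ↔ ∃ e, Set.range r.ρ = {e' | le e' e} := by
  constructor
  · rintro ⟨t, ht⟩
    refine ⟨r.ρ t, Set.Subset.antisymm ?_ fun e he => hdown _ ⟨t, rfl⟩ e he⟩
    rintro _ ⟨a, rfl⟩
    exact (hle a t).1 (ht a)
  · rintro ⟨e, he⟩
    obtain ⟨t, rfl⟩ : e ∈ Set.range r.ρ := he ▸ hrefl e
    refine ⟨t, fun a => (hle a t).2 ?_⟩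
    have ha := Set.mem_range_self (f := r.ρ) a
    rwa [he] at ha

end Realisation

namespace RealMap

variable {A : Type u} {C : ConfigFamily A} {r r' : Realisation C}

theorem range_subset (m : RealMap r r') : Set.range r'.ρ ⊆ Set.range r.ρ := by
  rintro _ ⟨b, rfl⟩
  obtain ⟨a, ha⟩ := m.surj b
  exact ⟨a, m.commutes a b ha⟩

theorem exists_le_of_le (m : RealMap r r') {b : r.carrier} {a' b' : r'.carrier}
    (hb : m.f b = some b') (h : r'.le a' b') : ∃ a, r.le a b ∧ m.f a = some a' :=
  m.presDown _ (r.isDown_le b) b' ⟨b, r.le_refl b, hb⟩ a' h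

theorem IsIso.eq_of_f_eq {m : RealMap r r'} (hm : m.IsIso) {a a' : r.carrier}
    {b : r'.carrier} (ha : m.f a = some b) (ha' : m.f a' = some b) : a = a' := by
  obtain ⟨m', hm'⟩ := hm
  exact Option.some.inj (((hm' a b).1 ha).symm.trans ((hm' a' b).1 ha'))

theorem isIso_of_bijective (m : RealMap r r') {g : r.carrier → r'.carrier}
    (hg : ∀ a, m.f a = some (g a)) (hbij : g.Bijective)
    (hdown : ∀ y, r'.IsDown y → r.IsDown (g ⁻¹' y)) : m.IsIso := by
  let e := Equiv.ofBijective g hbij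
  have he : ∀ b a, some (e.symm b) = some a ↔ g a = b := fun b a => by
    rw [Option.some_inj, Equiv.symm_apply_eq, eq_comm]
    rfl
  have hpimage : ∀ y, pimage (fun b => some (e.symm b)) y = g ⁻¹' y := fun y => by
    ext a
    simp only [pimage, he, Set.mem_ofPred_eq, Set.mem_preimage, exists_eq_right']
  refine ⟨⟨fun b => some (e.symm b), fun a => ⟨g a, (he _ _).2 rfl⟩,
    fun y hy => hpimage y ▸ hdown y hy, fun b a hba => ?_⟩, fun a b => ?_⟩
  · obtain rfl := (he b a).1 hba
    exact (m.commutes a _ (hg a)).symm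
  · rw [hg, Option.some_inj, he, eq_comm]

/-- The map sending `a` to the unique `b` with `r'.ρ b = r.ρ a`, when there is one. -/
noncomputable def ofRangeSubset {le : A → A → Prop} (hF : ∀ x ∈ C.F, DnClosed le x)
    (hinj : Function.Injective r'.ρ) (hmono : ∀ b c, r'.le b c → le (r'.ρ b) (r'.ρ c))
    (hsub : Set.range r'.ρ ⊆ Set.range r.ρ) : RealMap r r' where
  f a := Function.partialInv r'.ρ (r.ρ a)
  surj b := by
    obtain ⟨a, ha⟩ := hsub ⟨b, rfl⟩
    exact ⟨a, (hinj.isPartialInv _ _).2 ha.symm⟩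
  presDown u hu := by
    rintro b ⟨a, ha, hab⟩ c hcb
    have hab : r'.ρ b = r.ρ a := (hinj.isPartialInv _ _).1 hab
    obtain ⟨a', ha', hac⟩ := hF _ (r.real u hu) (r'.ρ b) ⟨a, ha, hab.symm⟩ _ (hmono c b hcb)
    exact ⟨a', ha', (hinj.isPartialInv _ _).2 hac.symm⟩
  commutes a b hab := ((hinj.isPartialInv _ _).1 hab).symm

theorem ofRangeSubset_f_eq_some {le : A → A → Prop} {hF : ∀ x ∈ C.F, DnClosed le x}
    {hinj : Function.Injective r'.ρ} {hmono : ∀ b c, r'.le b c → le (r'.ρ b) (r'.ρ c)}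
    {hsub : Set.range r'.ρ ⊆ Set.range r.ρ} {a : r.carrier} {b : r'.carrier} :
    (ofRangeSubset hF hinj hmono hsub).f a = some b ↔ r'.ρ b = r.ρ a :=
  hinj.isPartialInv _ _

end RealMap

section PES

variable {E : Type u} {D : PESData E} {C : ConfigFamily E}

theorem dnClosed_of_mem (hC : C.F = {x | IsCfg D.le D.Con x}) : ∀ x ∈ C.F, DnClosed D.le x :=
  fun _ hx => (hC ▸ hx).1

def Realisation.ofCfg (hD : IsPES D) (hC : C.F = {x | IsCfg D.le D.Con x})
    (x : Set E) (hx : x ∈ C.F) : Realisation C where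
  carrier := x
  le a b := D.le a b
  le_refl _ := hD.le_refl _
  le_trans _ _ _ := hD.le_trans _ _ _
  le_antisymm _ _ h₁ h₂ := Subtype.ext (hD.le_antisymm _ _ h₁ h₂)
  finPast e := (hD.finCause e).preimage Subtype.val_injective.injOn
  ρ := Subtype.val
  real u hu := by
    rw [hC] at hx ⊢
    refine hx.of_subset (by simp) ?_
    rintro _ ⟨a, ha, rfl⟩ b hb
    exact ⟨⟨b, hx.1 _ a.2 _ hb⟩, hu a ha _ hb, rfl⟩

theorem Realisation.range_ofCfg (hD : IsPES D) (hC : C.F = {x | IsCfg D.le D.Con x})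
    (x : Set E) (hx : x ∈ C.F) : Set.range (ofCfg hD hC x hx).ρ = x :=
  Subtype.range_coe

theorem Realisation.extremal_ofCfg (hD : IsPES D) (hC : C.F = {x | IsCfg D.le D.Con x})
    (x : Set E) (hx : x ∈ C.F) : (ofCfg hD hC x hx).Extremal := by
  intro r' m hm
  choose g hg using hm
  have hρg : ∀ a, r'.ρ (g a) = a.1 := fun a => (m.commutes a (g a) (hg a)).symm
  have hinj : g.Injective := fun a a' h => Subtype.ext (by rw [← hρg a, ← hρg a', h])
  have hsurj : g.Surjective := fun b => by
    obtain ⟨a, ha⟩ := m.surj b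
    exact ⟨a, Option.some.inj ((hg a).symm.trans ha)⟩
  refine m.isIso_of_bijective hg ⟨hinj, hsurj⟩ fun y hy a ha c hca => ?_
  -- `ρ'` of the down-closed `y` is a configuration containing `ρ' (g a) = a`, hence `c`.
  obtain ⟨b, hb, hbc⟩ := dnClosed_of_mem hC _ (r'.real y hy) _ ⟨g a, ha, hρg a⟩ _ hca
  obtain ⟨c', rfl⟩ := hsurj b
  exact (Subtype.ext ((hρg c').symm.trans hbc) : c' = c) ▸ hb

theorem Realisation.Extremal.injective_and_le_iff (hD : IsPES D)
    (hC : C.F = {x | IsCfg D.le D.Con x}) {r : Realisation C} (hr : r.Extremal) :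
    Function.Injective r.ρ ∧ ∀ a b, r.le a b ↔ D.le (r.ρ a) (r.ρ b) := by
  set r' := ofCfg hD hC _ r.range_mem
  let m : RealMap r r' :=
    RealMap.ofRangeSubset (dnClosed_of_mem hC) Subtype.val_injective (fun _ _ h => h)
      (range_ofCfg hD hC _ r.range_mem).subset
  have hm : ∀ a, m.f a = some ⟨r.ρ a, Set.mem_range_self a⟩ := fun a =>
    RealMap.ofRangeSubset_f_eq_some.2 rfl
  have hiso := hr r' m fun a => ⟨_, hm a⟩
  have hinj : Function.Injective r.ρ := fun a a' h =>
    hiso.eq_of_f_eq (hm a) (by rw [hm a']; simp [h])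
  refine ⟨hinj, fun a b => ⟨fun hab => ?_, fun hab => ?_⟩⟩
  · obtain ⟨m', hm'⟩ := hiso
    obtain ⟨c, hc, hca⟩ := m'.exists_le_of_le ((hm' _ _).1 (hm b)) hab
    obtain rfl := Option.some.inj ((hm a).symm.trans ((hm' _ _).2 hca))
    exact hc
  · obtain ⟨a', ha', ha'a⟩ :=
      m.exists_le_of_le (a' := ⟨r.ρ a, Set.mem_range_self a⟩) (hm b) hab
    have : r.ρ a' = r.ρ a := congrArg Subtype.val (Option.some.inj ((hm a').symm.trans ha'a))
    rwa [← hinj this]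

end PES

/-- For a prime event structure, extremal realisations of its family of
configurations are order-isomorphic (via `ρ`) to their image configurations,
the map `r ↦ ρR` is an order isomorphism from the order of extremal
realisations to the configurations ordered by inclusion, and prime extremal
realisations correspond exactly to the complete primes `[e]`. -/
theorem stmt11 {E : Type u} (D : PESData E) (hD : IsPES D) (C : ConfigFamily E)
    (hC : C.F = {x | IsCfg D.le D.Con x}) :
    (∀ r : Realisation C, r.Extremal →
        Function.Injective r.ρ ∧ (∀ a b, r.le a b ↔ D.le (r.ρ a) (r.ρ b)) ∧
        Set.range r.ρ ∈ C.F) ∧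
    (∀ x ∈ C.F, ∃ r : Realisation C, r.Extremal ∧ Set.range r.ρ = x) ∧
    (∀ r r' : Realisation C, r.Extremal → r'.Extremal →
        (Nonempty (RealMap r r') ↔ Set.range r'.ρ ⊆ Set.range r.ρ)) ∧
    (∀ r : Realisation C, r.Extremal →
        (r.HasTop ↔ ∃ e : E, Set.range r.ρ = {e' | D.le e' e})) := by
  have hext := fun (r : Realisation C) (hr : r.Extremal) => hr.injective_and_le_iff hD hC
  refine ⟨fun r hr => ⟨(hext r hr).1, (hext r hr).2, r.range_mem⟩,
    fun x hx => ⟨_, Realisation.extremal_ofCfg hD hC x hx, Realisation.range_ofCfg hD hC x hx⟩,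
    fun r r' _ hr' => ⟨fun ⟨m⟩ => m.range_subset, fun hsub => ?_⟩,
    fun r hr => r.hasTop_iff_range_eq hD.le_refl (hext r hr).2
      (dnClosed_of_mem hC _ r.range_mem)⟩
  obtain ⟨hinj', hle'⟩ := hext r' hr'
  exact ⟨RealMap.ofRangeSubset (dnClosed_of_mem hC) hinj' (fun b c => (hle' b c).1) hsub⟩
end

section
/- A map of ese's from P to Q, i.e. a map of equivalence families from (C(P),≡_P) to (C(Q),≡_Q), is exactly a partial function f : P ⇀ Q which preserves ≡ such that: (i) for all X ∈ Con_P, the direct image fX ∈ Con_Q, and for all p₁, p₂ ∈ X, f(p₁) ≡_Q f(p₂) (both defined) implies p₁ ≡_P p₂; and (ii) whenever q ≤_Q f(p) there is p' ≤_P p with f(p') = q. -/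
universe u v w

/-!
Configurations and consistent sets determine each other well enough for the two notions of map
to agree: every finite subset of a configuration is consistent, and conversely the down-closure
of a consistent set is a configuration, because the axiom `X ∈ Con → e ≤ e' ∈ X → X ∪ {e} ∈ Con`
lets one add its finitely many causes one at a time. Reflection of causality is the
down-closedness of the image of the configuration `[p]`.
-/

section PartialImage

variable {α : Type u} {β : Type v} (f : α → Option β)

lemma pimage_eq_preimage_image (x : Set α) : pimage f x = Option.some ⁻¹' (f '' x) := by
  ext; simp [pimage]

lemma pimage_mono {x y : Set α} (h : x ⊆ y) : pimage f x ⊆ pimage f y :=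
  fun _ ⟨a, ha, hfa⟩ => ⟨a, h ha, hfa⟩

lemma Set.Finite.pimage {x : Set α} (hx : x.Finite) : (pimage f x).Finite := by
  rw [pimage_eq_preimage_image]
  exact (hx.image f).preimage (Option.some_injective _).injOn

lemma exists_finite_subset_of_subset_pimage {x : Set α} {Y : Set β} (hY : Y.Finite)
    (hYx : Y ⊆ pimage f x) : ∃ X ⊆ x, X.Finite ∧ Y ⊆ pimage f X := by
  rw [pimage_eq_preimage_image, ← Set.image_subset_iff] at hYx
  obtain ⟨X, hXx, hX, hXY⟩ := Set.exists_subset_image_finite_and.mp ⟨_, hYx, hY.image _, rfl⟩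
  refine ⟨X, hXx, hX, ?_⟩
  rw [pimage_eq_preimage_image, ← Set.image_subset_iff, hXY]

end PartialImage

def downClosure {P : Type u} (le : P → P → Prop) (X : Set P) : Set P :=
  {p | ∃ x ∈ X, le p x}

namespace IsESE

variable {P : Type u} {D : ESEData P}

lemma subset_downClosure (hD : IsESE D) (X : Set P) : X ⊆ downClosure D.le X :=
  fun p hp => ⟨p, hp, hD.le_refl p⟩

lemma dnClosed_downClosure (hD : IsESE D) (X : Set P) : DnClosed D.le (downClosure D.le X) :=
  fun _ ⟨x, hx, hax⟩ _ hba => ⟨x, hx, hD.le_trans _ _ _ hba hax⟩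

lemma union_mem_con_of_subset_downClosure (hD : IsESE D) {X Z : Set P} (hX : X ∈ D.Con)
    (hZ : Z.Finite) (hZX : Z ⊆ downClosure D.le X) : X ∪ Z ∈ D.Con := by
  induction Z, hZ using Set.Finite.induction_on with
  | empty => simpa using hX
  | @insert a Z _ _ ih =>
    obtain ⟨x, hx, hax⟩ := hZX (Set.mem_insert a Z)
    have hXZ := ih ((Set.subset_insert a Z).trans hZX)
    refine hD.con_mono _ _ ?_ (hD.con_le _ hXZ a x hax (Or.inl hx))
    rw [Set.union_insert, Set.insert_eq, Set.union_comm {a}]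

lemma downClosure_mem_cfgs (hD : IsESE D) {X : Set P} (hX : X ∈ D.Con) :
    downClosure D.le X ∈ Cfgs D :=
  ⟨hD.dnClosed_downClosure X, fun _ hZX hZ =>
    hD.con_mono _ _ Set.subset_union_right (hD.union_mem_con_of_subset_downClosure hX hZ hZX)⟩

end IsESE

section Characterisation

variable {P : Type u} {Q : Type v} {DP : ESEData P} {DQ : ESEData Q} {f : P → Option Q}

lemma IsESEMap.pimage_mem_con (hP : IsESE DP) (hf : IsESEMap DP DQ f) {X : Set P}
    (hX : X ∈ DP.Con) : pimage f X ∈ DQ.Con :=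
  (hf.2 _ (hP.downClosure_mem_cfgs hX)).1.2 _ (pimage_mono f (hP.subset_downClosure X))
    ((hP.con_fin X hX).pimage f)

lemma IsESEMap.eqv_of_mem_con (hP : IsESE DP) (hf : IsESEMap DP DQ f) {X : Set P}
    (hX : X ∈ DP.Con) {p₁ p₂ : P} (hp₁ : p₁ ∈ X) (hp₂ : p₂ ∈ X) {q₁ q₂ : Q}
    (hq₁ : f p₁ = some q₁) (hq₂ : f p₂ = some q₂) (hq : DQ.eqv q₁ q₂) : DP.eqv p₁ p₂ :=
  (hf.2 _ (hP.downClosure_mem_cfgs hX)).2 p₁ (hP.subset_downClosure X hp₁)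
    p₂ (hP.subset_downClosure X hp₂) q₁ q₂ hq₁ hq₂ hq

lemma IsESEMap.exists_le_of_le (hP : IsESE DP) (hf : IsESEMap DP DQ f) {p : P} {q' : Q}
    (hp : f p = some q') {q : Q} (hq : DQ.le q q') : ∃ p', DP.le p' p ∧ f p' = some q := by
  have hdn := (hf.2 _ (hP.downClosure_mem_cfgs (hP.con_single p))).1.1
  obtain ⟨p', ⟨_, rfl, hp'⟩, hfp'⟩ :=
    hdn q' ⟨p, hP.subset_downClosure _ rfl, hp⟩ q hq
  exact ⟨p', hp', hfp'⟩

lemma pimage_mem_cfgs (hQ : IsESE DQ) (hcon : ∀ X ∈ DP.Con, pimage f X ∈ DQ.Con)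
    (hle : ∀ p q', f p = some q' → ∀ q, DQ.le q q' → ∃ p', DP.le p' p ∧ f p' = some q)
    {x : Set P} (hx : x ∈ Cfgs DP) : pimage f x ∈ Cfgs DQ := by
  refine ⟨fun q' ⟨p, hp, hfp⟩ q hq => ?_, fun Y hYx hY => ?_⟩
  · obtain ⟨p', hp', hfp'⟩ := hle p q' hfp q hq
    exact ⟨p', hx.1 p hp p' hp', hfp'⟩
  · obtain ⟨X, hXx, hX, hYX⟩ := exists_finite_subset_of_subset_pimage f hY hYx
    exact hQ.con_mono _ _ hYX (hcon X (hx.2 X hXx hX))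

end Characterisation

/-- Characterisation of maps of ese's: a partial function is a map of ese's
iff it preserves the equivalence, sends consistent sets to consistent sets
locally reflecting the equivalence, and reflects causal dependency. -/
theorem stmt12 {Pt : Type u} {Qt : Type v} (DP : ESEData Pt) (hP : IsESE DP)
    (DQ : ESEData Qt) (hQ : IsESE DQ) (f : Pt → Option Qt) :
    IsESEMap DP DQ f ↔
      (PreservesEqv DP.eqv DQ.eqv f ∧
       (∀ X ∈ DP.Con, pimage f X ∈ DQ.Con ∧
          ∀ p₁ ∈ X, ∀ p₂ ∈ X, ∀ q₁ q₂, f p₁ = some q₁ → f p₂ = some q₂ →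
            DQ.eqv q₁ q₂ → DP.eqv p₁ p₂) ∧
       (∀ p q', f p = some q' → ∀ q, DQ.le q q' → ∃ p', DP.le p' p ∧ f p' = some q)) := by
  constructor
  · intro hf
    exact ⟨hf.1, fun X hX => ⟨hf.pimage_mem_con hP hX, fun p₁ hp₁ p₂ hp₂ q₁ q₂ =>
      hf.eqv_of_mem_con hP hX hp₁ hp₂⟩, fun p q' hp q => hf.exists_le_of_le hP hp⟩
  · rintro ⟨hpres, hcon, hle⟩
    refine ⟨hpres, fun x hx => ⟨pimage_mem_cfgs hQ (fun X hX => (hcon X hX).1) hle hx, ?_⟩⟩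
    intro p₁ hp₁ p₂ hp₂
    have hpair : ({p₁, p₂} : Set Pt) ∈ DP.Con :=
      hx.2 _ (Set.insert_subset hp₁ (Set.singleton_subset_iff.mpr hp₂)) (Set.toFinite _)
    exact (hcon _ hpair).2 p₁ (Set.mem_insert _ _) p₂ (Set.mem_insert_of_mem _ rfl)
end

section
/- Let f : P → Q be a (partial) map of ese's and let V = {p ∈ P : f(p) is defined}, a ≡-closed subset of P. Then f factors as f = f₁ ∘ f₀ where f₀ : P → P↓V is the partial map sending p ∈ V to itself and undefined elsewhere, and f₁ : P↓V → Q is the total map acting as f on V. Moreover this factorisation is universal: for any factorisation f = g₁ ∘ g₀ with g₀ : P → P₁ a partial map of ese's and g₁ : P₁ → Q a total map of ese's, there is a unique (necessarily total) map h : P↓V → P₁ of ese's such that h ∘ f₀ = g₀ and g₁ ∘ h = f₁. -/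
universe u v w

/-- The restriction (projection) of an ese to a subset of its events, with the
restricted causal dependency, consistency and equivalence. -/
def restrictESE {P : Type u} (D : ESEData P) (V : Set P) : ESEData ↥V where
  le := fun a b => D.le a.val b.val
  Con := {X | Subtype.val '' X ∈ D.Con}
  eqv := fun a b => D.eqv a.val b.val

/-- The domain of definition of a partial function. -/
def domOf {α : Type u} {β : Type v} (f : α → Option β) : Set α := {a | ∃ b, f a = some b}

open Classical in
/-- The projection map `P → P↓V` where `V` is the domain of definition of `f`:
the identity on `V` and undefined elsewhere. -/
noncomputable def projMap {α : Type u} {β : Type v} (f : α → Option β) (a : α) :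
    Option ↥(domOf f) :=
  if h : a ∈ domOf f then some ⟨a, h⟩ else none
/-!
The factorisation is forced: `f₀` must be the identity on `V = domOf f`, which is `≡`-closed since
`f` preserves `≡`. Restricting a map `g` that is undefined off `V` to `P↓V` keeps it a map, because
a configuration of `P↓V` has the same image under `g` as its down-closure in `P`, which is a
configuration of `P`. For a factorisation `f = g₁ ∘ g₀` with `g₁` total, `g₀` has domain `V`, so the
mediating map is the restriction of `g₀`, and `h ∘ f₀ = g₀` pins it down on all of `V`.
-/

section DomOf

variable {α : Type u} {β : Type v} {γ : Type w}

theorem notMem_domOf_iff {f : α → Option β} {a : α} : a ∉ domOf f ↔ f a = none := by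
  simp [domOf, Option.eq_none_iff_forall_ne_some]

theorem domOf_eq_of_eq_bind {f : α → Option β} {g₀ : α → Option γ} {g₁ : γ → Option β}
    (hg₁ : ∀ c, ∃ b, g₁ c = some b) (hfac : ∀ a, f a = (g₀ a).bind g₁) :
    domOf f = domOf g₀ := by
  ext a
  simp only [domOf, Set.mem_ofPred_eq, hfac a]
  cases g₀ a with
  | none => simp
  | some c => simpa using hg₁ c

theorem PreservesEqv.mem_domOf_iff {eA : α → α → Prop} {eB : β → β → Prop}
    {f : α → Option β} (hf : PreservesEqv eA eB f) {a₁ a₂ : α} (h : eA a₁ a₂) :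
    a₁ ∈ domOf f ↔ a₂ ∈ domOf f := by
  rcases hf a₁ a₂ h with ⟨h₁, h₂⟩ | ⟨b₁, b₂, h₁, h₂, -⟩
  · rw [← notMem_domOf_iff] at h₁ h₂
    exact iff_of_false h₁ h₂
  · exact iff_of_true ⟨b₁, h₁⟩ ⟨b₂, h₂⟩

end DomOf

section ProjMap

variable {α : Type u} {β : Type v} {γ : Type w} {f : α → Option β} {a : α}

theorem projMap_of_mem (h : a ∈ domOf f) : projMap f a = some ⟨a, h⟩ := dif_pos h

theorem projMap_of_notMem (h : a ∉ domOf f) : projMap f a = none := dif_neg h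

theorem projMap_eq_some_iff {v : ↥(domOf f)} : projMap f a = some v ↔ v.val = a := by
  by_cases h : a ∈ domOf f
  · simp [projMap_of_mem h, Subtype.ext_iff, eq_comm]
  · simp only [projMap_of_notMem h, reduceCtorEq, false_iff]
    rintro rfl
    exact h v.2

theorem pimage_projMap (x : Set α) : pimage (projMap f) x = Subtype.val ⁻¹' x := by
  ext v
  simp [pimage, projMap_eq_some_iff]

theorem bind_projMap_of_domOf_subset {g : α → Option γ} (hg : domOf g ⊆ domOf f) (a : α) :
    (projMap f a).bind (fun v => g v.val) = g a := by
  by_cases h : a ∈ domOf f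
  · rw [projMap_of_mem h]
    rfl
  · rw [projMap_of_notMem h, Option.bind_none, notMem_domOf_iff.mp fun ha => h (hg ha)]

theorem eq_of_forall_eq_bind_projMap {g : α → Option γ} {h : ↥(domOf f) → Option γ}
    (hh : ∀ a, g a = (projMap f a).bind h) : h = fun v => g v.val := by
  funext v
  rw [hh, projMap_of_mem v.2]
  rfl

end ProjMap

namespace IsESE

variable {P : Type u} {D : ESEData P}

theorem union_mem_Con (hD : IsESE D) {Y X : Set P} (hY : Y ∈ D.Con) (hX : X.Finite)
    (hXY : ∀ a ∈ X, ∃ b ∈ Y, D.le a b) : Y ∪ X ∈ D.Con := by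
  induction X, hX using Set.Finite.induction_on with
  | empty => simpa using hY
  | @insert a X _ _ ih =>
    obtain ⟨b, hb, hab⟩ := hXY a (Set.mem_insert a X)
    have hYX := ih fun c hc => hXY c (Set.mem_insert_of_mem a hc)
    rw [Set.union_insert, ← Set.union_singleton]
    exact hD.con_le _ hYX a b hab (Or.inl hb)

theorem downClosure_mem_Cfgs (hD : IsESE D) {V : Set P} {y : Set ↥V}
    (hy : y ∈ Cfgs (restrictESE D V)) : {p | ∃ v ∈ y, D.le p v.val} ∈ Cfgs D := by
  refine ⟨fun a ⟨v, hv, hav⟩ b hba => ⟨v, hv, hD.le_trans _ _ _ hba hav⟩, fun X hX hXfin => ?_⟩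
  choose w hw hle using hX
  have : Finite X := hXfin.to_subtype
  -- the witnesses `w` form a finite subset of `y`, hence are consistent
  have hW : Subtype.val '' Set.range (fun a : X => w a.2) ∈ D.Con :=
    hy.2 _ (Set.range_subset_iff.2 fun a => hw a.2) (Set.finite_range _)
  exact hD.con_mono _ _ Set.subset_union_right <|
    hD.union_mem_Con hW hXfin fun a ha => ⟨_, ⟨_, ⟨⟨a, ha⟩, rfl⟩, rfl⟩, hle ha⟩

end IsESE

section Maps

variable {P : Type u} {R : Type v} {D : ESEData P} {E : ESEData R}

theorem isESEMap_projMap {f : P → Option R} (hf : PreservesEqv D.eqv E.eqv f) :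
    IsESEMap D (restrictESE D (domOf f)) (projMap f) := by
  refine ⟨fun a₁ a₂ h => ?_, fun x hx => ⟨?_, ?_⟩⟩
  · by_cases h₁ : a₁ ∈ domOf f
    · exact .inr ⟨_, _, projMap_of_mem h₁, projMap_of_mem ((hf.mem_domOf_iff h).mp h₁), h⟩
    · exact .inl ⟨projMap_of_notMem h₁, projMap_of_notMem ((hf.mem_domOf_iff h).not.mp h₁)⟩
  · rw [pimage_projMap]
    exact ⟨fun a ha b hba => hx.1 _ ha _ hba,
      fun X hX hXfin => hx.2 _ (Set.image_subset_iff.mpr hX) (hXfin.image _)⟩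
  · intro a₁ _ a₂ _ b₁ b₂ h₁ h₂ hb
    rw [projMap_eq_some_iff] at h₁ h₂
    exact h₁ ▸ h₂ ▸ hb

theorem IsESEMap.restrict (hD : IsESE D) {g : P → Option R} (hg : IsESEMap D E g) {V : Set P}
    (hV : domOf g ⊆ V) : IsESEMap (restrictESE D V) E (fun v => g v.val) := by
  refine ⟨fun v₁ v₂ h => hg.1 v₁.val v₂.val h, fun y hy => ?_⟩
  have hx := hD.downClosure_mem_Cfgs hy
  -- `g` is undefined off `V`, and `y` is down-closed in `V`
  have himg : pimage (fun v : ↥V => g v.val) y = pimage g {p | ∃ v ∈ y, D.le p v.val} := by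
    ext b
    constructor
    · rintro ⟨v, hv, hb⟩
      exact ⟨v.val, ⟨v, hv, hD.le_refl _⟩, hb⟩
    · rintro ⟨p, ⟨v, hv, hpv⟩, hb⟩
      exact ⟨⟨p, hV ⟨b, hb⟩⟩, hy.1 v hv _ hpv, hb⟩
  refine ⟨himg ▸ (hg.2 _ hx).1, fun v₁ h₁ v₂ h₂ => ?_⟩
  exact (hg.2 _ hx).2 v₁.val ⟨v₁, h₁, hD.le_refl _⟩ v₂.val ⟨v₂, h₂, hD.le_refl _⟩

end Maps

theorem stmt18_general {Pt : Type u} {Qt : Type v} (DP : ESEData Pt) (hP : IsESE DP)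
    (DQ : ESEData Qt) (f : Pt → Option Qt)
    (hf : IsESEMap DP DQ f) :
    IsESEMap DP (restrictESE DP (domOf f)) (projMap f) ∧
    IsESEMap (restrictESE DP (domOf f)) DQ (fun v => f v.val) ∧
    (∀ v : ↥(domOf f), ∃ q, f v.val = some q) ∧
    (∀ p, f p = (projMap f p).bind (fun v => f v.val)) ∧
    ∀ (P₁t : Type w) (D₁ : ESEData P₁t), IsESE D₁ →
      ∀ (g₀ : Pt → Option P₁t) (g₁ : P₁t → Option Qt),
        IsESEMap DP D₁ g₀ → IsESEMap D₁ DQ g₁ → (∀ a, ∃ b, g₁ a = some b) →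
        (∀ p, f p = (g₀ p).bind g₁) →
        ∃! h : ↥(domOf f) → Option P₁t,
          IsESEMap (restrictESE DP (domOf f)) D₁ h ∧
          (∀ p, g₀ p = (projMap f p).bind h) ∧
          (∀ v : ↥(domOf f), f v.val = (h v).bind g₁) := by
  refine ⟨isESEMap_projMap hf.1, hf.restrict hP subset_rfl, fun v => v.2,
    fun p => (bind_projMap_of_domOf_subset subset_rfl p).symm, ?_⟩
  intro P₁t D₁ _ g₀ g₁ hg₀ _ hg₁ hfac
  have hdom : domOf g₀ ⊆ domOf f := (domOf_eq_of_eq_bind hg₁ hfac).ge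
  refine ⟨fun v => g₀ v.val, ⟨hg₀.restrict hP hdom, ?_, fun v => hfac v.val⟩, ?_⟩
  · exact fun p => (bind_projMap_of_domOf_subset hdom p).symm
  · rintro h ⟨-, hh, -⟩
    exact eq_of_forall_eq_bind_projMap hh

/-- Partial–total factorisation of maps of ese's through the projection to
the domain of definition, and its universal property. -/
theorem stmt18 {Pt : Type u} {Qt : Type v} (DP : ESEData Pt) (hP : IsESE DP)
    (DQ : ESEData Qt) (hQ : IsESE DQ) (f : Pt → Option Qt)
    (hf : IsESEMap DP DQ f) :
    IsESEMap DP (restrictESE DP (domOf f)) (projMap f) ∧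
    IsESEMap (restrictESE DP (domOf f)) DQ (fun v => f v.val) ∧
    (∀ v : ↥(domOf f), ∃ q, f v.val = some q) ∧
    (∀ p, f p = (projMap f p).bind (fun v => f v.val)) ∧
    ∀ (P₁t : Type w) (D₁ : ESEData P₁t), IsESE D₁ →
      ∀ (g₀ : Pt → Option P₁t) (g₁ : P₁t → Option Qt),
        IsESEMap DP D₁ g₀ → IsESEMap D₁ DQ g₁ → (∀ a, ∃ b, g₁ a = some b) →
        (∀ p, f p = (g₀ p).bind g₁) →
        ∃! h : ↥(domOf f) → Option P₁t,
          IsESEMap (restrictESE DP (domOf f)) D₁ h ∧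
          (∀ p, g₀ p = (projMap f p).bind h) ∧
          (∀ v : ↥(domOf f), f v.val = (h v).bind g₁) :=
  stmt18_general DP hP DQ f hf
end
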